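/- arXiv:2302.01412 — 6 statements merged into one kernel-verified Lean document; each statement's English description precedes it below -/
import Mathlib

section
/- Let α⋆ ∈ ℝ, y₀ ∈ ℝ², p⋆ ∈ ℝ. Let Φ: ℝ × ℝ² → ℝ be C^∞ in a neighborhood of (α⋆, y₀) and H: ℝ² → ℝ be C^∞ in a neighborhood of y₀ with H(y₀) = 0, ∇H(y₀) ≠ 0, Φ(α⋆, y₀) = p⋆, and ∇_x Φ(α⋆, y₀) = ∇H(y₀). Let Θ₀^⊥ be a unit vector orthogonal to ∇H(y₀) and assume M := (Θ₀^⊥·∇)²[Φ(α⋆, ·) − H](y₀) ≠ 0. Then there exist an open interval Ω ∋ α⋆ and C^∞ functions y: Ω → ℝ² and λ: Ω → ℝ with y(α⋆) = y₀ and λ(α⋆) = 1 such that H(y(α)) = 0 and λ(α)∇H(y(α)) = ∇_x Φ(α, y(α)) for all α ∈ Ω (i.e., the level curve {x : Φ(α,x) = Φ(α, y(α))} is tangent to {H = 0} at y(α)); moreover the function P(α) := Φ(α, y(α)) satisfies P(α⋆) = p⋆, P ∈ C^∞(Ω), and P'(α⋆) = ∂_α Φ(α⋆, y₀). -/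
open MeasureTheory Real Filter Topology

/-- Euclidean dot product on `ℝ × ℝ`. -/
def dot2 (x y : ℝ × ℝ) : ℝ := x.1 * y.1 + x.2 * y.2

private lemma clm_pair (L : (ℝ × ℝ) →L[ℝ] ℝ) (v : ℝ × ℝ) :
    L v = v.1 * L (1, 0) + v.2 * L (0, 1) := by
  have hv : v = v.1 • ((1 : ℝ), (0 : ℝ)) + v.2 • ((0 : ℝ), (1 : ℝ)) := by
    ext <;> simp
  have h2 : L v = v.1 • L (1, 0) + v.2 • L (0, 1) := by
    rw [← L.map_smul, ← L.map_smul, ← L.map_add, ← hv]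
  rw [h2]; simp [smul_eq_mul]

private lemma clm_pair3 (L : (ℝ × (ℝ × ℝ)) →L[ℝ] ℝ) (v : ℝ × ℝ) :
    L (0, v) = v.1 * L (0, (1, 0)) + v.2 * L (0, (0, 1)) := by
  have hv : ((0 : ℝ), v) = v.1 • ((0:ℝ), ((1:ℝ), (0:ℝ))) + v.2 • ((0:ℝ), ((0:ℝ), (1:ℝ))) := by
    ext <;> simp
  have h2 : L (0, v) = v.1 • L (0, (1, 0)) + v.2 • L (0, (0, 1)) := by
    rw [← L.map_smul, ← L.map_smul, ← L.map_add, ← hv]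
  rw [h2]; simp [smul_eq_mul]

private noncomputable def clmEquivOfInj {E : Type*} [NormedAddCommGroup E] [NormedSpace ℝ E]
    [FiniteDimensional ℝ E] (L : E →L[ℝ] E) (h : Function.Injective L) : E ≃L[ℝ] E :=
  LinearEquiv.toContinuousLinearEquiv
    (LinearEquiv.ofBijective (L : E →ₗ[ℝ] E)
      ⟨h, LinearMap.injective_iff_surjective.mp h⟩)

private lemma clmEquivOfInj_coe {E : Type*} [NormedAddCommGroup E] [NormedSpace ℝ E]
    [FiniteDimensional ℝ E] (L : E →L[ℝ] E) (h : Function.Injective L) :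
    ((clmEquivOfInj L h : E ≃L[ℝ] E) : E →L[ℝ] E) = L := by
  ext x; rfl

private lemma isUnit_of_equiv {E : Type*} [NormedAddCommGroup E] [NormedSpace ℝ E]
    (e : E ≃L[ℝ] E) : IsUnit ((e : E →L[ℝ] E)) := by
  refine ⟨⟨(e : E →L[ℝ] E), (e.symm : E →L[ℝ] E), ?_, ?_⟩, rfl⟩
  · apply ContinuousLinearMap.ext
    intro z
    simp [ContinuousLinearMap.mul_apply]
  · apply ContinuousLinearMap.ext
    intro z
    simp [ContinuousLinearMap.mul_apply]

private lemma isUnit_inj {E : Type*} [NormedAddCommGroup E] [NormedSpace ℝ E]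
    {L : E →L[ℝ] E} (h : IsUnit L) : Function.Injective L := by
  obtain ⟨u, rfl⟩ := h
  intro x y hxy
  have h1 : ((↑u⁻¹ * ↑u : E →L[ℝ] E)) x = ((↑u⁻¹ * ↑u : E →L[ℝ] E)) y := by
    simp only [ContinuousLinearMap.mul_apply]
    rw [hxy]
  rw [u.inv_mul] at h1
  simpa using h1

set_option maxHeartbeats 1000000 in
theorem stmt_2 (αs : ℝ) (y₀ : ℝ × ℝ) (ps : ℝ)
    (Φ : ℝ → ℝ × ℝ → ℝ) (H : ℝ × ℝ → ℝ)
    (hΦ : ∃ W : Set (ℝ × (ℝ × ℝ)), IsOpen W ∧ (αs, y₀) ∈ W ∧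
      ContDiffOn ℝ (⊤ : ℕ∞) (fun p : ℝ × (ℝ × ℝ) => Φ p.1 p.2) W)
    (hH : ∃ V : Set (ℝ × ℝ), IsOpen V ∧ y₀ ∈ V ∧ ContDiffOn ℝ (⊤ : ℕ∞) H V)
    (hH0 : H y₀ = 0) (hdH : fderiv ℝ H y₀ ≠ 0)
    (hΦp : Φ αs y₀ = ps)
    (hgrad : fderiv ℝ (Φ αs) y₀ = fderiv ℝ H y₀)
    (Θperp : ℝ × ℝ) (hunit : dot2 Θperp Θperp = 1)
    (horth : fderiv ℝ H y₀ Θperp = 0)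
    (hM : deriv (deriv (fun t : ℝ => Φ αs (y₀ + t • Θperp) - H (y₀ + t • Θperp))) 0 ≠ 0) :
    ∃ Ω : Set ℝ, (∃ a b : ℝ, Ω = Set.Ioo a b) ∧ αs ∈ Ω ∧
      ∃ y : ℝ → ℝ × ℝ, ∃ lam : ℝ → ℝ,
        ContDiffOn ℝ (⊤ : ℕ∞) y Ω ∧ ContDiffOn ℝ (⊤ : ℕ∞) lam Ω ∧
        y αs = y₀ ∧ lam αs = 1 ∧
        (∀ α ∈ Ω, H (y α) = 0 ∧
          lam α • fderiv ℝ H (y α) = fderiv ℝ (Φ α) (y α)) ∧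
        Φ αs (y αs) = ps ∧
        ContDiffOn ℝ (⊤ : ℕ∞) (fun α => Φ α (y α)) Ω ∧
        deriv (fun α => Φ α (y α)) αs = deriv (fun α => Φ α y₀) αs := by
  classical
  obtain ⟨W, hWo, hWm, hWs⟩ := hΦ
  obtain ⟨V, hVo, hVm, hVs⟩ := hH
  set Φf : ℝ × (ℝ × ℝ) → ℝ := fun p => Φ p.1 p.2 with hΦfdef
  set gH1 : ℝ × ℝ → ℝ := fun x => fderiv ℝ H x (1, 0) with hgH1def
  set gH2 : ℝ × ℝ → ℝ := fun x => fderiv ℝ H x (0, 1) with hgH2def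
  set gP1 : ℝ × (ℝ × ℝ) → ℝ := fun p => fderiv ℝ Φf p (0, (1, 0)) with hgP1def
  set gP2 : ℝ × (ℝ × ℝ) → ℝ := fun p => fderiv ℝ Φf p (0, (0, 1)) with hgP2def
  set Jf : ℝ × (ℝ × ℝ) → ℝ := fun p => gP1 p * (-(gH2 p.2)) + gP2 p * gH1 p.2 with hJfdef
  set Gm : ℝ × (ℝ × ℝ) → ℝ × (ℝ × ℝ) := fun p => (p.1, (H p.2, Jf p)) with hGmdef
  set U : Set (ℝ × (ℝ × ℝ)) := W ∩ {p | p.2 ∈ V} with hUdef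
  have hUo : IsOpen U := hWo.inter (hVo.preimage continuous_snd)
  have hq₀U : (αs, y₀) ∈ U := ⟨hWm, hVm⟩
  -- abbreviations for scalars
  set T1 : ℝ := Θperp.1 with hT1def
  set T2 : ℝ := Θperp.2 with hT2def
  set N1 : ℝ := fderiv ℝ H y₀ (1, 0) with hN1def
  set N2 : ℝ := fderiv ℝ H y₀ (0, 1) with hN2def
  set CC : ℝ := -T2 * N1 + T1 * N2 with hCCdef
  have hunit' : T1 * T1 + T2 * T2 = 1 := by simpa [dot2] using hunit
  have horth' : T1 * N1 + T2 * N2 = 0 := by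
    have := clm_pair (fderiv ℝ H y₀) Θperp
    rw [horth] at this
    linarith [this]
  -- key chain rule: partial x derivative of Φ in terms of full derivative
  have hkey : ∀ (a : ℝ) (x : ℝ × ℝ), (a, x) ∈ W → ∀ v : ℝ × ℝ,
      fderiv ℝ (Φ a) x v = fderiv ℝ Φf (a, x) (0, v) := by
    intro a x hp v
    set p : ℝ × (ℝ × ℝ) := (a, x) with hpdef
    have hd : DifferentiableAt ℝ Φf p :=
      (hWs.contDiffAt (hWo.mem_nhds hp)).differentiableAt (by simp)
    have hd' : HasFDerivAt Φf (fderiv ℝ Φf p) (p.1, p.2) := by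
      rw [Prod.mk.eta]; exact hd.hasFDerivAt
    have h1 : HasFDerivAt (fun x : ℝ × ℝ => (p.1, x))
        (((0 : (ℝ × ℝ) →L[ℝ] ℝ)).prod (ContinuousLinearMap.id ℝ (ℝ × ℝ))) p.2 :=
      (hasFDerivAt_const p.1 p.2).prodMk (hasFDerivAt_id p.2)
    have h2 : HasFDerivAt (fun x : ℝ × ℝ => Φf (p.1, x))
        ((fderiv ℝ Φf p).comp
          (((0 : (ℝ × ℝ) →L[ℝ] ℝ)).prod (ContinuousLinearMap.id ℝ (ℝ × ℝ)))) p.2 :=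
      hd'.comp p.2 h1
    have h3 : fderiv ℝ (Φ p.1) p.2 = (fderiv ℝ Φf p).comp
        (((0 : (ℝ × ℝ) →L[ℝ] ℝ)).prod (ContinuousLinearMap.id ℝ (ℝ × ℝ))) := h2.fderiv
    have h4 : fderiv ℝ (Φ a) x = fderiv ℝ (Φ p.1) p.2 := rfl
    rw [h4, h3]
    simp
  have hgrad1 : gP1 (αs, y₀) = N1 := by
    have := hkey αs y₀ hWm (1, 0)
    rw [hgrad] at this
    exact this.symm
  have hgrad2 : gP2 (αs, y₀) = N2 := by
    have := hkey αs y₀ hWm (0, 1)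
    rw [hgrad] at this
    exact this.symm
  have hden0 : N1 ^ 2 + N2 ^ 2 ≠ 0 := by
    intro h
    have h1 : N1 = 0 := by nlinarith
    have h2 : N2 = 0 := by nlinarith
    apply hdH
    apply ContinuousLinearMap.ext
    intro v
    rw [clm_pair (fderiv ℝ H y₀) v]
    rw [← hN1def, ← hN2def, h1, h2]
    simp
  have hrep1 : N1 = -CC * T2 := by
    rw [hCCdef]; linear_combination (-N1) * hunit' + T1 * horth'
  have hrep2 : N2 = CC * T1 := by
    rw [hCCdef]; linear_combination (-N2) * hunit' + T2 * horth'
  have hCC0 : CC ≠ 0 := by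
    intro h
    apply hden0
    rw [hrep1, hrep2, h]; ring
  -- smoothness of the derivative component functions
  have hgH1s : ContDiffOn ℝ (⊤ : ℕ∞) gH1 V := by
    exact (hVs.fderiv_of_isOpen hVo (by simp)).clm_apply contDiffOn_const
  have hgH2s : ContDiffOn ℝ (⊤ : ℕ∞) gH2 V := by
    exact (hVs.fderiv_of_isOpen hVo (by simp)).clm_apply contDiffOn_const
  have hgP1s : ContDiffOn ℝ (⊤ : ℕ∞) gP1 W := by
    exact (hWs.fderiv_of_isOpen hWo (by simp)).clm_apply contDiffOn_const
  have hgP2s : ContDiffOn ℝ (⊤ : ℕ∞) gP2 W := by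
    exact (hWs.fderiv_of_isOpen hWo (by simp)).clm_apply contDiffOn_const
  have hJs : ContDiffOn ℝ (⊤ : ℕ∞) Jf U := by
    have h1 : ContDiffOn ℝ (⊤ : ℕ∞) (fun p : ℝ × (ℝ × ℝ) => gH1 p.2) U :=
      hgH1s.comp contDiff_snd.contDiffOn fun p hp => hp.2
    have h2 : ContDiffOn ℝ (⊤ : ℕ∞) (fun p : ℝ × (ℝ × ℝ) => gH2 p.2) U :=
      hgH2s.comp contDiff_snd.contDiffOn fun p hp => hp.2
    exact ((hgP1s.mono Set.inter_subset_left).mul h2.neg).add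
      ((hgP2s.mono Set.inter_subset_left).mul h1)
  have hGs : ContDiffOn ℝ (⊤ : ℕ∞) Gm U := by
    refine contDiff_fst.contDiffOn.prodMk (ContDiffOn.prodMk ?_ hJs)
    exact hVs.comp contDiff_snd.contDiffOn fun p hp => hp.2
  -- derivative along the line y₀ + t Θperp
  set cv : ℝ → ℝ × ℝ := fun t => y₀ + t • Θperp with hcvdef
  have hcv : ∀ t : ℝ, HasDerivAt cv Θperp t := by
    intro t
    have := ((hasDerivAt_id t).smul_const Θperp).const_add y₀
    simpa [hcvdef] using this
  have hcv0 : cv 0 = y₀ := by simp [hcvdef]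
  have hgH1y : gH1 y₀ = N1 := rfl
  have hgH2y : gH2 y₀ = N2 := rfl
  -- second derivative data
  set A1 : (ℝ × ℝ) →L[ℝ] ℝ := fderiv ℝ (fun x : ℝ × ℝ => gP1 (αs, x)) y₀ with hA1def
  set A2 : (ℝ × ℝ) →L[ℝ] ℝ := fderiv ℝ (fun x : ℝ × ℝ => gP2 (αs, x)) y₀ with hA2def
  set B1 : (ℝ × ℝ) →L[ℝ] ℝ := fderiv ℝ gH1 y₀ with hB1def
  set B2 : (ℝ × ℝ) →L[ℝ] ℝ := fderiv ℝ gH2 y₀ with hB2def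
  have hA1d : DifferentiableAt ℝ (fun x : ℝ × ℝ => gP1 (αs, x)) y₀ :=
    ((hgP1s.contDiffAt (hWo.mem_nhds hWm)).comp y₀
      (contDiffAt_const.prodMk contDiffAt_id)).differentiableAt (by simp)
  have hA2d : DifferentiableAt ℝ (fun x : ℝ × ℝ => gP2 (αs, x)) y₀ :=
    ((hgP2s.contDiffAt (hWo.mem_nhds hWm)).comp y₀
      (contDiffAt_const.prodMk contDiffAt_id)).differentiableAt (by simp)
  have hB1d : DifferentiableAt ℝ gH1 y₀ :=
    (hgH1s.contDiffAt (hVo.mem_nhds hVm)).differentiableAt (by simp)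
  have hB2d : DifferentiableAt ℝ gH2 y₀ :=
    (hgH2s.contDiffAt (hVo.mem_nhds hVm)).differentiableAt (by simp)
  have hq1 : HasDerivAt (fun t : ℝ => gP1 (αs, cv t)) (A1 Θperp) 0 := by
    have hf : HasFDerivAt (fun x : ℝ × ℝ => gP1 (αs, x)) A1 (cv 0) := by
      rw [hcv0]; exact hA1d.hasFDerivAt
    exact hf.comp_hasDerivAt 0 (hcv 0)
  have hq2 : HasDerivAt (fun t : ℝ => gP2 (αs, cv t)) (A2 Θperp) 0 := by
    have hf : HasFDerivAt (fun x : ℝ × ℝ => gP2 (αs, x)) A2 (cv 0) := by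
      rw [hcv0]; exact hA2d.hasFDerivAt
    exact hf.comp_hasDerivAt 0 (hcv 0)
  have hq3 : HasDerivAt (fun t : ℝ => gH1 (cv t)) (B1 Θperp) 0 := by
    have hf : HasFDerivAt gH1 B1 (cv 0) := by
      rw [hcv0]; exact hB1d.hasFDerivAt
    exact hf.comp_hasDerivAt 0 (hcv 0)
  have hq4 : HasDerivAt (fun t : ℝ => gH2 (cv t)) (B2 Θperp) 0 := by
    have hf : HasFDerivAt gH2 B2 (cv 0) := by
      rw [hcv0]; exact hB2d.hasFDerivAt
    exact hf.comp_hasDerivAt 0 (hcv 0)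
  -- the value of M
  have hMval : (T1 * A1 Θperp + T2 * A2 Θperp) - (T1 * B1 Θperp + T2 * B2 Θperp) ≠ 0 := by
    set k : ℝ → ℝ := fun t => Φ αs (y₀ + t • Θperp) - H (y₀ + t • Θperp) with hkdef
    set qf : ℝ → ℝ := fun t =>
      (T1 * gP1 (αs, cv t) + T2 * gP2 (αs, cv t))
        - (T1 * gH1 (cv t) + T2 * gH2 (cv t)) with hqfdef
    have hTo : IsOpen {t : ℝ | (αs, cv t) ∈ U} := by
      have hc : Continuous fun t : ℝ => ((αs : ℝ), cv t) := by
        simp only [hcvdef]; fun_prop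
      exact hUo.preimage hc
    have h0T : (0 : ℝ) ∈ {t : ℝ | (αs, cv t) ∈ U} := by
      show (αs, cv 0) ∈ U
      rw [hcv0]; exact hq₀U
    have hkd : ∀ t ∈ {t : ℝ | (αs, cv t) ∈ U}, HasDerivAt k (qf t) t := by
      intro t ht
      have htW : (αs, cv t) ∈ W := ht.1
      have htV : cv t ∈ V := ht.2
      have hΦd : HasFDerivAt Φf (fderiv ℝ Φf (αs, cv t)) (αs, cv t) :=
        ((hWs.contDiffAt (hWo.mem_nhds htW)).differentiableAt (by simp)).hasFDerivAt
      have hcur : HasDerivAt (fun s : ℝ => ((αs : ℝ), cv s)) ((0 : ℝ), Θperp) t :=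
        (hasDerivAt_const t αs).prodMk (hcv t)
      have h1 : HasDerivAt (fun s : ℝ => Φf (αs, cv s))
          (fderiv ℝ Φf (αs, cv t) ((0 : ℝ), Θperp)) t := by have := hΦd.comp_hasDerivAt t hcur; exact this
      have h2 : HasDerivAt (fun s : ℝ => H (cv s)) (fderiv ℝ H (cv t) Θperp) t :=
        ((hVs.contDiffAt (hVo.mem_nhds htV)).differentiableAt
          (by simp)).hasFDerivAt.comp_hasDerivAt t (hcv t)
      have h3 : HasDerivAt k
          (fderiv ℝ Φf (αs, cv t) ((0 : ℝ), Θperp) - fderiv ℝ H (cv t) Θperp) t := h1.sub h2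
      have hval : fderiv ℝ Φf (αs, cv t) ((0 : ℝ), Θperp) - fderiv ℝ H (cv t) Θperp = qf t := by
        rw [clm_pair3 (fderiv ℝ Φf (αs, cv t)) Θperp, clm_pair (fderiv ℝ H (cv t)) Θperp]
      rw [← hval]; exact h3
    have hev1 : deriv k =ᶠ[𝓝 0] qf := by
      filter_upwards [hTo.mem_nhds h0T] with t ht using (hkd t ht).deriv
    have e1 : deriv (deriv k) 0 = deriv qf 0 := hev1.deriv_eq
    have hq : HasDerivAt qf
        ((T1 * A1 Θperp + T2 * A2 Θperp) - (T1 * B1 Θperp + T2 * B2 Θperp)) 0 :=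
      ((hq1.const_mul T1).add (hq2.const_mul T2)).sub
        ((hq3.const_mul T1).add (hq4.const_mul T2))
    have e2 : deriv qf 0 = (T1 * A1 Θperp + T2 * A2 Θperp)
        - (T1 * B1 Θperp + T2 * B2 Θperp) := hq.deriv
    have hMk : deriv (deriv k) 0 ≠ 0 := hM
    rw [e1, e2] at hMk
    exact hMk
  -- derivative of Jf at the base point
  have hJ'd : DifferentiableAt ℝ Jf (αs, y₀) :=
    (hJs.contDiffAt (hUo.mem_nhds hq₀U)).differentiableAt (by simp)
  have hJΘ : fderiv ℝ Jf (αs, y₀) ((0 : ℝ), Θperp) ≠ 0 := by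
    have hcur : HasDerivAt (fun s : ℝ => ((αs : ℝ), cv s)) ((0 : ℝ), Θperp) 0 :=
      (hasDerivAt_const 0 αs).prodMk (hcv 0)
    have hf : HasFDerivAt Jf (fderiv ℝ Jf (αs, y₀)) (αs, cv 0) := by
      rw [hcv0]; exact hJ'd.hasFDerivAt
    have h1 : HasDerivAt (fun t : ℝ => Jf (αs, cv t))
        (fderiv ℝ Jf (αs, y₀) ((0 : ℝ), Θperp)) 0 := by have := hf.comp_hasDerivAt 0 hcur; exact this
    have h2 : HasDerivAt (fun t : ℝ => Jf (αs, cv t))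
        ((A1 Θperp * (-(gH2 (cv 0))) + gP1 (αs, cv 0) * (-(B2 Θperp)))
          + (A2 Θperp * gH1 (cv 0) + gP2 (αs, cv 0) * (B1 Θperp))) 0 :=
      (hq1.mul hq4.neg).add (hq2.mul hq3)
    have huniq := h1.unique h2
    rw [hcv0, hgrad1, hgrad2, hgH1y, hgH2y] at huniq
    have hfin : A1 Θperp * (-N2) + N1 * (-(B2 Θperp)) + (A2 Θperp * N1 + N2 * B1 Θperp)
        = (-CC) * ((T1 * A1 Θperp + T2 * A2 Θperp) - (T1 * B1 Θperp + T2 * B2 Θperp)) := by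
      rw [hrep1, hrep2]; ring
    rw [huniq, hfin]
    exact mul_ne_zero (neg_ne_zero.mpr hCC0) hMval
  -- the linear map L₀ and invertibility
  set dHy : (ℝ × ℝ) →L[ℝ] ℝ := fderiv ℝ H y₀ with hdHydef
  set J' : (ℝ × (ℝ × ℝ)) →L[ℝ] ℝ := fderiv ℝ Jf (αs, y₀) with hJ'def
  set L₀ : (ℝ × (ℝ × ℝ)) →L[ℝ] (ℝ × (ℝ × ℝ)) :=
    (ContinuousLinearMap.fst ℝ ℝ (ℝ × ℝ)).prod
      ((dHy.comp (ContinuousLinearMap.snd ℝ ℝ (ℝ × ℝ))).prod J') with hL₀def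
  have hL₀app : ∀ z : ℝ × (ℝ × ℝ), L₀ z = (z.1, (dHy z.2, J' z)) := fun z => rfl
  have hL₀ : HasFDerivAt Gm L₀ (αs, y₀) := by
    have hHdy : HasFDerivAt H dHy y₀ :=
      ((hVs.contDiffAt (hVo.mem_nhds hVm)).differentiableAt (by simp)).hasFDerivAt
    have hH2 : HasFDerivAt (fun p : ℝ × (ℝ × ℝ) => H p.2)
        (dHy.comp (ContinuousLinearMap.snd ℝ ℝ (ℝ × ℝ))) (αs, y₀) :=
      hHdy.comp (αs, y₀) hasFDerivAt_snd
    have hJd : HasFDerivAt Jf J' (αs, y₀) := hJ'd.hasFDerivAt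
    exact hasFDerivAt_fst.prodMk (hH2.prodMk hJd)
  have hdHy1 : dHy (1, 0) = N1 := rfl
  have hdHy2 : dHy (0, 1) = N2 := rfl
  have hinj : Function.Injective L₀ := by
    have hker : ∀ z : ℝ × (ℝ × ℝ), L₀ z = 0 → z = 0 := by
      rintro ⟨a, v⟩ hz
      rw [hL₀app] at hz
      have ha : a = 0 := congrArg Prod.fst hz
      have h1 : dHy v = 0 := congrArg (fun w : ℝ × (ℝ × ℝ) => w.2.1) hz
      have h2 : J' (a, v) = 0 := congrArg (fun w : ℝ × (ℝ × ℝ) => w.2.2) hz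
      subst ha
      rw [clm_pair dHy v, hdHy1, hdHy2] at h1
      have ht0 : CC * (-T2 * v.1 + T1 * v.2) = 0 := by
        linear_combination h1 - v.1 * hrep1 - v.2 * hrep2
      have ht : -T2 * v.1 + T1 * v.2 = 0 := by
        rcases mul_eq_zero.mp ht0 with h | h
        · exact absurd h hCC0
        · exact h
      have hv1 : v.1 = (T1 * v.1 + T2 * v.2) * T1 := by
        linear_combination (-v.1) * hunit' - T2 * ht
      have hv2 : v.2 = (T1 * v.1 + T2 * v.2) * T2 := by
        linear_combination (-v.2) * hunit' + T1 * ht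
      have hveq : ((0 : ℝ), v) = (T1 * v.1 + T2 * v.2) • ((0 : ℝ), Θperp) := by
        rw [Prod.ext_iff]
        constructor
        · simp
        · rw [Prod.ext_iff]
          constructor
          · show v.1 = ((T1 * v.1 + T2 * v.2) • Θperp).1
            rw [Prod.smul_fst, smul_eq_mul, ← hT1def]
            exact hv1
          · show v.2 = ((T1 * v.1 + T2 * v.2) • Θperp).2
            rw [Prod.smul_snd, smul_eq_mul, ← hT2def]
            exact hv2
      have hs0 : T1 * v.1 + T2 * v.2 = 0 := by
        have h3 : J' ((T1 * v.1 + T2 * v.2) • ((0 : ℝ), Θperp)) = 0 := by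
          rw [← hveq]; exact h2
        rw [ContinuousLinearMap.map_smul, smul_eq_mul] at h3
        rcases mul_eq_zero.mp h3 with h | h
        · exact h
        · exact absurd h hJΘ
      have hv1' : v.1 = 0 := by rw [hv1, hs0, zero_mul]
      have hv2' : v.2 = 0 := by rw [hv2, hs0, zero_mul]
      simp [Prod.ext_iff, hv1', hv2']
    intro a b hab
    have h := hker (a - b) (by rw [map_sub, hab, sub_self])
    exact sub_eq_zero.mp h
  set eL : (ℝ × (ℝ × ℝ)) ≃L[ℝ] (ℝ × (ℝ × ℝ)) := clmEquivOfInj L₀ hinj with heLdef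
  have hLeq : HasFDerivAt Gm (eL : (ℝ × (ℝ × ℝ)) →L[ℝ] (ℝ × (ℝ × ℝ))) (αs, y₀) := by
    rw [heLdef, clmEquivOfInj_coe]; exact hL₀
  have hGAt : ContDiffAt ℝ (⊤ : ℕ∞) Gm (αs, y₀) := hGs.contDiffAt (hUo.mem_nhds hq₀U)
  set PH : OpenPartialHomeomorph (ℝ × (ℝ × ℝ)) (ℝ × (ℝ × ℝ)) :=
    hGAt.toOpenPartialHomeomorph Gm hLeq (by simp) with hPHdef
  have hPHcoe : (PH : ℝ × (ℝ × ℝ) → ℝ × (ℝ × ℝ)) = Gm := rfl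
  have hsrc : (αs, y₀) ∈ PH.source := hGAt.mem_toOpenPartialHomeomorph_source hLeq (by simp)
  have hGq₀ : Gm (αs, y₀) = (αs, (0 : ℝ × ℝ)) := by
    have hJf0 : Jf (αs, y₀) = 0 := by
      have e : Jf (αs, y₀) = gP1 (αs, y₀) * (-(gH2 y₀)) + gP2 (αs, y₀) * gH1 y₀ := rfl
      rw [e, hgrad1, hgrad2, hgH1y, hgH2y]; ring
    have e2 : Gm (αs, y₀) = (αs, (H y₀, Jf (αs, y₀))) := rfl
    rw [e2, hH0, hJf0]
    rfl
  have htgt : (αs, (0 : ℝ × ℝ)) ∈ PH.target := by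
    have := hGAt.image_mem_toOpenPartialHomeomorph_target hLeq (by simp)
    rwa [hGq₀] at this
  have hsymm0 : PH.symm (αs, (0 : ℝ × ℝ)) = (αs, y₀) := by
    have := PH.left_inv hsrc
    rw [hPHcoe, hGq₀] at this
    exact this
  -- the good set S
  set S : Set (ℝ × (ℝ × ℝ)) :=
    U ∩ (fderiv ℝ Gm) ⁻¹' {L : (ℝ × (ℝ × ℝ)) →L[ℝ] (ℝ × (ℝ × ℝ)) | IsUnit L} with hSdef
  have hSo : IsOpen S :=
    (hGs.continuousOn_fderiv_of_isOpen hUo (by simp)).isOpen_inter_preimage hUo Units.isOpen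
  have hq₀S : (αs, y₀) ∈ S := by
    refine ⟨hq₀U, ?_⟩
    have hfd : fderiv ℝ Gm (αs, y₀) = L₀ := hL₀.fderiv
    simp only [Set.mem_preimage, hfd, Set.mem_setOf_eq]
    have hu := isUnit_of_equiv eL
    rwa [heLdef, clmEquivOfInj_coe] at hu
  -- eventual facts
  set yf : ℝ → ℝ × ℝ := fun α => (PH.symm (α, (0 : ℝ × ℝ))).2 with hyfdef
  have hyf0 : yf αs = y₀ := by rw [hyfdef]; simp [hsymm0]
  have hcont1 : ContinuousAt (fun α : ℝ => (α, (0 : ℝ × ℝ))) αs :=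
    continuousAt_id.prodMk continuousAt_const
  have hsymmc : ContinuousAt (PH.symm ∘ (fun α : ℝ => (α, (0 : ℝ × ℝ)))) αs :=
    ContinuousAt.comp (PH.continuousAt_symm htgt) hcont1
  have hev : ∀ᶠ α in 𝓝 αs, ((α, (0 : ℝ × ℝ)) ∈ PH.target
      ∧ PH.symm (α, (0 : ℝ × ℝ)) ∈ S)
      ∧ gH1 (yf α) ^ 2 + gH2 (yf α) ^ 2 ≠ 0 := by
    have hyfc : ContinuousAt yf αs := hsymmc.snd
    have ev1 : ∀ᶠ α in 𝓝 αs, (α, (0 : ℝ × ℝ)) ∈ PH.target :=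
      hcont1.eventually_mem (PH.open_target.mem_nhds htgt)
    have ev2 : ∀ᶠ α in 𝓝 αs, PH.symm (α, (0 : ℝ × ℝ)) ∈ S := by
      have hmem : (PH.symm ∘ fun α : ℝ => (α, (0 : ℝ × ℝ))) αs ∈ S := by
        show PH.symm (αs, (0 : ℝ × ℝ)) ∈ S
        rw [hsymm0]; exact hq₀S
      exact hsymmc.eventually_mem (hSo.mem_nhds hmem)
    have h1 : ContinuousAt gH1 (yf αs) := by
      rw [hyf0]
      exact hgH1s.continuousOn.continuousAt (hVo.mem_nhds hVm)
    have h2 : ContinuousAt gH2 (yf αs) := by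
      rw [hyf0]
      exact hgH2s.continuousOn.continuousAt (hVo.mem_nhds hVm)
    have hdenc : ContinuousAt (fun α => gH1 (yf α) ^ 2 + gH2 (yf α) ^ 2) αs :=
      ((h1.comp hyfc).pow 2).add ((h2.comp hyfc).pow 2)
    have hdenne : gH1 (yf αs) ^ 2 + gH2 (yf αs) ^ 2 ≠ 0 := by
      rw [hyf0, hgH1y, hgH2y]; exact hden0
    have ev3 := hdenc.eventually_ne hdenne
    filter_upwards [ev1, ev2, ev3] with α g1 g2 g3 using ⟨⟨g1, g2⟩, g3⟩
  obtain ⟨ε, hεpos, hball⟩ := Metric.eventually_nhds_iff_ball.mp hev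
  set Ω : Set ℝ := Set.Ioo (αs - ε) (αs + ε) with hΩdef
  have hΩmem : ∀ α ∈ Ω, ((α, (0 : ℝ × ℝ)) ∈ PH.target
      ∧ PH.symm (α, (0 : ℝ × ℝ)) ∈ S)
      ∧ gH1 (yf α) ^ 2 + gH2 (yf α) ^ 2 ≠ 0 := by
    intro α hα
    apply hball
    rw [Real.ball_eq_Ioo]
    exact hα
  have hαsΩ : αs ∈ Ω := by
    constructor <;> simp [hΩdef] <;> linarith
  -- identification of the symm map
  have hy_eq : ∀ α, (α, (0 : ℝ × ℝ)) ∈ PH.target →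
      PH.symm (α, (0 : ℝ × ℝ)) = (α, yf α) := by
    intro α h
    have h1 := PH.right_inv h
    rw [hPHcoe] at h1
    have h2 : (Gm (PH.symm (α, (0 : ℝ × ℝ)))).1 = α := by rw [h1]
    exact Prod.ext h2 rfl
  have hF0 : ∀ α, (α, (0 : ℝ × ℝ)) ∈ PH.target →
      H (yf α) = 0 ∧ Jf (α, yf α) = 0 := by
    intro α h
    have h1 := PH.right_inv h
    rw [hPHcoe, hy_eq α h] at h1
    have h2 : H (yf α) = 0 := congrArg (fun z => z.2.1) h1
    have h3 : Jf (α, yf α) = 0 := congrArg (fun z => z.2.2) h1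
    exact ⟨h2, h3⟩
  have hWmem : ∀ α ∈ Ω, (α, yf α) ∈ W := by
    intro α hα
    have := ((hΩmem α hα).1.2)
    rw [hy_eq α (hΩmem α hα).1.1] at this
    exact this.1.1
  have hVmem : ∀ α ∈ Ω, yf α ∈ V := by
    intro α hα
    have := ((hΩmem α hα).1.2)
    rw [hy_eq α (hΩmem α hα).1.1] at this
    exact this.1.2
  -- smoothness of yf
  have hysmooth : ∀ α ∈ Ω, ContDiffAt ℝ (⊤ : ℕ∞) yf α := by
    intro α hα
    obtain ⟨⟨htg, hS⟩, hden⟩ := hΩmem α hα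
    have hbU : PH.symm (α, (0 : ℝ × ℝ)) ∈ U := hS.1
    have hbUnit : IsUnit (fderiv ℝ Gm (PH.symm (α, (0 : ℝ × ℝ)))) := hS.2
    have hGb : ContDiffAt ℝ (⊤ : ℕ∞) Gm (PH.symm (α, (0 : ℝ × ℝ))) :=
      hGs.contDiffAt (hUo.mem_nhds hbU)
    have hfd : HasFDerivAt Gm
        ((clmEquivOfInj _ (isUnit_inj hbUnit) :
          (ℝ × (ℝ × ℝ)) ≃L[ℝ] (ℝ × (ℝ × ℝ))) : (ℝ × (ℝ × ℝ)) →L[ℝ] (ℝ × (ℝ × ℝ)))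
        (PH.symm (α, (0 : ℝ × ℝ))) := by
      rw [clmEquivOfInj_coe]
      exact (hGb.differentiableAt (by simp)).hasFDerivAt
    have hsymm_at : ContDiffAt ℝ (⊤ : ℕ∞) PH.symm (α, (0 : ℝ × ℝ)) :=
      PH.contDiffAt_symm htg hfd hGb
    have hpair : ContDiffAt ℝ (⊤ : ℕ∞) (fun a : ℝ => (a, (0 : ℝ × ℝ))) α :=
      contDiffAt_id.prodMk contDiffAt_const
    exact (hsymm_at.comp α hpair).snd
  -- lam
  set lamf : ℝ → ℝ := fun α =>
    (gP1 (α, yf α) * gH1 (yf α) + gP2 (α, yf α) * gH2 (yf α))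
      / (gH1 (yf α) ^ 2 + gH2 (yf α) ^ 2) with hlamdef
  have hlam1 : lamf αs = 1 := by
    rw [hlamdef]
    simp only [hyf0, hgrad1, hgrad2]
    rw [div_eq_one_iff_eq hden0]
    ring
  have hlamsmooth : ∀ α ∈ Ω, ContDiffAt ℝ (⊤ : ℕ∞) lamf α := by
    intro α hα
    have hpair : ContDiffAt ℝ (⊤ : ℕ∞) (fun a : ℝ => (a, yf a)) α :=
      contDiffAt_id.prodMk (hysmooth α hα)
    have h1 : ContDiffAt ℝ (⊤ : ℕ∞) (fun a : ℝ => gP1 (a, yf a)) α :=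
      by have := (hgP1s.contDiffAt (hWo.mem_nhds (hWmem α hα))).comp α hpair; exact this
    have h2 : ContDiffAt ℝ (⊤ : ℕ∞) (fun a : ℝ => gP2 (a, yf a)) α :=
      by have := (hgP2s.contDiffAt (hWo.mem_nhds (hWmem α hα))).comp α hpair; exact this
    have h3 : ContDiffAt ℝ (⊤ : ℕ∞) (fun a : ℝ => gH1 (yf a)) α :=
      (hgH1s.contDiffAt (hVo.mem_nhds (hVmem α hα))).comp α (hysmooth α hα)
    have h4 : ContDiffAt ℝ (⊤ : ℕ∞) (fun a : ℝ => gH2 (yf a)) α :=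
      (hgH2s.contDiffAt (hVo.mem_nhds (hVmem α hα))).comp α (hysmooth α hα)
    exact ((h1.mul h3).add (h2.mul h4)).div ((h3.pow 2).add (h4.pow 2)) ((hΩmem α hα).2)
  have htangent : ∀ α ∈ Ω, lamf α • fderiv ℝ H (yf α) = fderiv ℝ (Φ α) (yf α) := by
    intro α hα
    have hWα := hWmem α hα
    have hJ0 := (hF0 α (hΩmem α hα).1.1).2
    have hdenα := (hΩmem α hα).2
    have hJ0' : gP1 (α, yf α) * (-(gH2 (yf α))) + gP2 (α, yf α) * gH1 (yf α) = 0 := hJ0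
    have hl1 : lamf α * gH1 (yf α) = gP1 (α, yf α) := by
      simp only [hlamdef]
      rw [div_mul_eq_mul_div, div_eq_iff hdenα]
      linear_combination (gH2 (yf α)) * hJ0'
    have hl2 : lamf α * gH2 (yf α) = gP2 (α, yf α) := by
      simp only [hlamdef]
      rw [div_mul_eq_mul_div, div_eq_iff hdenα]
      linear_combination (-(gH1 (yf α))) * hJ0'
    apply ContinuousLinearMap.ext
    intro v
    rw [ContinuousLinearMap.smul_apply, clm_pair (fderiv ℝ H (yf α)) v,
      clm_pair (fderiv ℝ (Φ α) (yf α)) v, hkey α (yf α) hWα (1, 0), hkey α (yf α) hWα (0, 1)]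
    have e1 : fderiv ℝ H (yf α) ((1 : ℝ), (0 : ℝ)) = gH1 (yf α) := rfl
    have e2 : fderiv ℝ H (yf α) ((0 : ℝ), (1 : ℝ)) = gH2 (yf α) := rfl
    have e3 : fderiv ℝ Φf (α, yf α) ((0 : ℝ), ((1 : ℝ), (0 : ℝ))) = gP1 (α, yf α) := rfl
    have e4 : fderiv ℝ Φf (α, yf α) ((0 : ℝ), ((0 : ℝ), (1 : ℝ))) = gP2 (α, yf α) := rfl
    rw [e1, e2, e3, e4, smul_eq_mul]
    linear_combination v.1 * hl1 + v.2 * hl2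
  have hPsmooth : ∀ α ∈ Ω, ContDiffAt ℝ (⊤ : ℕ∞) (fun α => Φ α (yf α)) α := by
    intro α hα
    have hpair : ContDiffAt ℝ (⊤ : ℕ∞) (fun α : ℝ => (α, yf α)) α :=
      contDiffAt_id.prodMk (hysmooth α hα)
    exact (hWs.contDiffAt (hWo.mem_nhds (hWmem α hα))).comp α hpair
  have hΩo : IsOpen Ω := by rw [hΩdef]; exact isOpen_Ioo
  have hderiveq : deriv (fun α => Φ α (yf α)) αs = deriv (fun α => Φ α y₀) αs := by
    have hyd : DifferentiableAt ℝ yf αs := (hysmooth αs hαsΩ).differentiableAt (by simp)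
    have hcurve : HasDerivAt (fun a : ℝ => (a, yf a)) ((1 : ℝ), deriv yf αs) αs :=
      (hasDerivAt_id αs).prodMk hyd.hasDerivAt
    have hΦd : HasFDerivAt Φf (fderiv ℝ Φf (αs, y₀)) (αs, y₀) :=
      ((hWs.contDiffAt (hWo.mem_nhds hWm)).differentiableAt (by simp)).hasFDerivAt
    have hΦd' : HasFDerivAt Φf (fderiv ℝ Φf (αs, y₀)) (αs, yf αs) := by
      rw [hyf0]; exact hΦd
    have hP : HasDerivAt (fun a : ℝ => Φf (a, yf a))
        (fderiv ℝ Φf (αs, y₀) ((1 : ℝ), deriv yf αs)) αs := by have := hΦd'.comp_hasDerivAt αs hcurve; exact this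
    have hcurve2 : HasDerivAt (fun a : ℝ => (a, y₀)) ((1 : ℝ), (0 : ℝ × ℝ)) αs :=
      (hasDerivAt_id αs).prodMk (hasDerivAt_const αs y₀)
    have hQ : HasDerivAt (fun a : ℝ => Φf (a, y₀))
        (fderiv ℝ Φf (αs, y₀) ((1 : ℝ), (0 : ℝ × ℝ))) αs := by have := hΦd.comp_hasDerivAt αs hcurve2; exact this
    have hHd : HasFDerivAt H (fderiv ℝ H y₀) (yf αs) := by
      rw [hyf0]
      exact ((hVs.contDiffAt (hVo.mem_nhds hVm)).differentiableAt (by simp)).hasFDerivAt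
    have hHy : HasDerivAt (fun a : ℝ => H (yf a)) (fderiv ℝ H y₀ (deriv yf αs)) αs :=
      hHd.comp_hasDerivAt αs hyd.hasDerivAt
    have hzero : fderiv ℝ H y₀ (deriv yf αs) = 0 := by
      have h1 : deriv (fun a : ℝ => H (yf a)) αs = fderiv ℝ H y₀ (deriv yf αs) := hHy.deriv
      have h2 : (fun a : ℝ => H (yf a)) =ᶠ[𝓝 αs] fun _ => (0 : ℝ) := by
        filter_upwards [hΩo.mem_nhds hαsΩ] with a ha using (hF0 a (hΩmem a ha).1.1).1
      rw [← h1, h2.deriv_eq]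
      simp
    have hsplit : fderiv ℝ Φf (αs, y₀) ((1 : ℝ), deriv yf αs)
        = fderiv ℝ Φf (αs, y₀) ((1 : ℝ), (0 : ℝ × ℝ)) := by
      have hdecomp : ((1 : ℝ), deriv yf αs)
          = ((1 : ℝ), (0 : ℝ × ℝ)) + ((0 : ℝ), deriv yf αs) := by
        simp [Prod.ext_iff]
      rw [hdecomp, map_add]
      have h4 : fderiv ℝ Φf (αs, y₀) ((0 : ℝ), deriv yf αs) = 0 := by
        rw [← hkey αs y₀ hWm (deriv yf αs), hgrad]
        exact hzero
      rw [h4, add_zero]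
    have e5 : deriv (fun α => Φ α (yf α)) αs
        = fderiv ℝ Φf (αs, y₀) ((1 : ℝ), deriv yf αs) := hP.deriv
    have e6 : deriv (fun α => Φ α y₀) αs
        = fderiv ℝ Φf (αs, y₀) ((1 : ℝ), (0 : ℝ × ℝ)) := hQ.deriv
    rw [e5, e6, hsplit]
  refine ⟨Ω, ⟨αs - ε, αs + ε, rfl⟩, hαsΩ, yf, lamf,
    fun α hα => (hysmooth α hα).contDiffWithinAt,
    fun α hα => (hlamsmooth α hα).contDiffWithinAt,
    hyf0, hlam1,
    fun α hα => ⟨(hF0 α (hΩmem α hα).1.1).1, htangent α hα⟩,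
    by rw [hyf0]; exact hΦp,
    fun α hα => (hPsmooth α hα).contDiffWithinAt,
    hderiveq⟩
end

section
/- The function Ψ is continuous on ℝ × (ℝ ∖ {0}) × ℝ, i.e., (h, a, r) ↦ Ψ(h; a, r) is continuous at every point with a ≠ 0. -/
/-!
Away from the support of `w`, `ψ` is explicit: it vanishes to the right of the support, and to its
left `ψ(x) = ½ ∫ w(t) (t - x)^{-1/2} dt` has a smooth kernel, so the mean value theorem gives
`|ψ(x + h) - ψ(x)| ≲ |h| |x|^{-3/2}`. For `a` bounded away from `0` and `h`, `r` bounded, the `k`-th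
term of the lattice sum is therefore `O(|k|^{-3/2})` uniformly, and the Weierstrass M-test applies
to the terms `ψ(a(k - r) + h) - ψ(a(k - r))`, which are continuous because `ψ` is the convolution
of the continuous compactly supported `w` with a locally integrable kernel.
-/

open MeasureTheory Real Filter

noncomputable def psiF (w : ℝ → ℝ) (q : ℝ) : ℝ :=
  (1/2) * ∫ p in Set.Ioi (0:ℝ), w (q + p) * p ^ (-(1/2) : ℝ)

noncomputable def PsiF (w : ℝ → ℝ) (h a r : ℝ) : ℝ :=
  if a = 0 then 0
  else ∑' k : ℤ, (psiF w (a * ((k : ℝ) - r) + h) - psiF w (a * ((k : ℝ) - r)))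

open Set Function Topology

/-- A junk value of `rpow`: for `t < 0`, `t ^ y = exp (log t * y) * cos (y * π)`, which vanishes at
`y = -1/2`. -/
theorem rpow_neg_half_of_nonpos {t : ℝ} (ht : t ≤ 0) : t ^ (-(1/2) : ℝ) = 0 := by
  rw [rpow_def_of_nonpos ht, if_neg (by norm_num : (-(1/2) : ℝ) ≠ 0)]
  split_ifs
  · rfl
  · rw [neg_mul, cos_neg, show 1 / 2 * π = π / 2 by ring, cos_pi_div_two, mul_zero]

theorem locallyIntegrable_neg_rpow_neg_half :
    LocallyIntegrable (fun u : ℝ => (-u) ^ (-(1/2) : ℝ)) := by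
  refine locallyIntegrable_of_norm_le_rpow (C := 1) (α := 1/2) (by simp) (by norm_num) ?_ ?_
  · refine ae_of_all _ fun u => ?_
    simpa [abs_neg] using abs_rpow_le_abs_rpow (-u) (-(1/2))
  · exact (measurable_neg.pow_const _).aestronglyMeasurable

theorem abs_rpow_neg_half_sub_le {m a b : ℝ} (hm : 0 < m) (ha : m ≤ a) (hb : m ≤ b) :
    |a ^ (-(1/2) : ℝ) - b ^ (-(1/2) : ℝ)| ≤ m ^ (-(3/2) : ℝ) / 2 * |a - b| := by
  have hderiv : ∀ t ∈ Ici m, HasDerivWithinAt (fun t : ℝ => t ^ (-(1/2) : ℝ))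
      (-(1/2) * t ^ (-(1/2) - 1 : ℝ)) (Ici m) t := fun t ht =>
    (hasDerivAt_rpow_const (Or.inl (hm.trans_le ht).ne')).hasDerivWithinAt
  refine (convex_Ici m).norm_image_sub_le_of_norm_hasDerivWithin_le hderiv (fun t ht => ?_) hb ha
  rw [norm_mul, norm_of_nonneg (rpow_pos_of_pos (hm.trans_le ht) _).le]
  norm_num
  linarith [rpow_le_rpow_of_nonpos hm ht (by norm_num : (-(3/2) : ℝ) ≤ 0)]

theorem continuous_of_eq_add_integral {w w' : ℝ → ℝ} (hw' : LocallyIntegrable w')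
    (hprim : ∀ x, w x = w 0 + ∫ t in (0:ℝ)..x, w' t) : Continuous w := by
  rw [funext hprim]
  exact continuous_const.add (intervalIntegral.continuous_primitive
    (fun _ _ => (hw'.integrableOn_isCompact isCompact_uIcc).intervalIntegrable) 0)

theorem HasCompactSupport.exists_support_subset_Icc {w : ℝ → ℝ} (hw : HasCompactSupport w) :
    ∃ R, support w ⊆ Icc (-R) R := by
  obtain ⟨R, hR⟩ := hw.isCompact.isBounded.subset_closedBall 0
  refine ⟨R, (subset_tsupport w).trans (hR.trans ?_)⟩
  simp [closedBall_eq_Icc]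

theorem continuousAt_tsum_of_eventually_norm_le {ι X F : Type*} [TopologicalSpace X]
    [NormedAddCommGroup F] [CompleteSpace F] {f : ι → X → F} {u : ι → ℝ} {U : Set X} {x : X}
    (hf : ∀ i, Continuous (f i)) (hu : Summable u) (hU : U ∈ 𝓝 x)
    (hfu : ∀ᶠ i in cofinite, ∀ y ∈ U, ‖f i y‖ ≤ u i) :
    ContinuousAt (fun y => ∑' i, f i y) x :=
  ((tendstoUniformlyOn_tsum_of_cofinite_eventually hu hfu).continuousOn
    (Eventually.of_forall fun s =>
      (continuous_finsetSum s fun i _ => hf i).continuousOn).frequently).continuousAt hU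

section

variable {w : ℝ → ℝ}

theorem psiF_eq_integral (x : ℝ) :
    psiF w x = (1/2) * ∫ t, w t * (t - x) ^ (-(1/2) : ℝ) := by
  rw [psiF, setIntegral_eq_integral_of_forall_compl_eq_zero fun p hp => ?_]
  · conv_rhs => rw [← integral_add_right_eq_self _ x]
    simp [add_comm]
  · rw [rpow_neg_half_of_nonpos (not_lt.mp hp), mul_zero]

theorem psiF_eq_convolution :
    psiF w = (1/2 : ℝ) •
      convolution w (fun u => (-u) ^ (-(1/2) : ℝ)) (ContinuousLinearMap.lsmul ℝ ℝ) volume := by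
  ext x
  simp [psiF_eq_integral, convolution_def]

theorem integrable_mul_rpow_neg_half (hw : Continuous w) (hws : HasCompactSupport w) (x : ℝ) :
    Integrable fun t => w t * (t - x) ^ (-(1/2) : ℝ) := by
  simpa [ConvolutionExistsAt] using
    hws.convolutionExists_left (ContinuousLinearMap.lsmul ℝ ℝ) hw
      locallyIntegrable_neg_rpow_neg_half x

theorem continuous_psiF (hw : Continuous w) (hws : HasCompactSupport w) :
    Continuous (psiF w) := by
  rw [psiF_eq_convolution]
  exact (hws.continuous_convolution_left _ hw locallyIntegrable_neg_rpow_neg_half).const_smul _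

theorem psiF_eq_zero_of_le {R x : ℝ} (hR : support w ⊆ Icc (-R) R) (hx : R ≤ x) :
    psiF w x = 0 := by
  rw [psiF, setIntegral_eq_zero_of_forall_eq_zero fun p hp => ?_, mul_zero]
  rw [notMem_support.mp fun h => (hR h).2.not_gt (by linarith [mem_Ioi.mp hp]), zero_mul]

theorem abs_psiF_add_sub_le (hw : Continuous w) (hws : HasCompactSupport w) {R x h : ℝ}
    (hR : support w ⊆ Icc (-R) R) (hx : 2 * (R + |h|) ≤ |x|) :
    |psiF w (x + h) - psiF w x| ≤ (∫ t, |w t|) / 4 * |h| * (|x| / 2) ^ (-(3/2) : ℝ) := by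
  have hC : 0 ≤ (∫ t, |w t|) / 4 * |h| * (|x| / 2) ^ (-(3/2) : ℝ) := by
    have : 0 ≤ ∫ t, |w t| := integral_nonneg fun t => abs_nonneg _
    positivity
  rcases le_or_gt 0 x with hx0 | hx0
  · rw [abs_of_nonneg hx0] at hx
    rwa [psiF_eq_zero_of_le hR (by linarith [neg_abs_le h]),
      psiF_eq_zero_of_le hR (by linarith [abs_nonneg h]), sub_zero, abs_zero]
  set m := |x| / 2
  have hm : 0 < m := half_pos (abs_pos.mpr hx0.ne)
  have hxm : m ≤ -x - R - |h| := by
    rw [abs_of_neg hx0] at hx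
    simp only [m, abs_of_neg hx0]
    linarith
  have hbound : ∀ t, ‖w t * (t - (x + h)) ^ (-(1/2) : ℝ) - w t * (t - x) ^ (-(1/2) : ℝ)‖
      ≤ |w t| * (m ^ (-(3/2) : ℝ) / 2 * |h|) := by
    intro t
    by_cases ht : w t = 0
    · simp [ht]
    have hRt : -R ≤ t := (hR ht).1
    rw [← mul_sub, norm_mul, norm_eq_abs, norm_eq_abs]
    refine mul_le_mul_of_nonneg_left ?_ (abs_nonneg _)
    have := abs_rpow_neg_half_sub_le hm (a := t - (x + h)) (b := t - x)
      (by linarith [le_abs_self h]) (by linarith [abs_nonneg h])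
    rwa [show t - (x + h) - (t - x) = -h by ring, abs_neg] at this
  rw [psiF_eq_integral, psiF_eq_integral, ← mul_sub,
    ← integral_sub (integrable_mul_rpow_neg_half hw hws _) (integrable_mul_rpow_neg_half hw hws _),
    abs_mul, abs_of_pos (by norm_num : (0 : ℝ) < 1/2)]
  calc 1 / 2 * |∫ t, (w t * (t - (x + h)) ^ (-(1/2) : ℝ) - w t * (t - x) ^ (-(1/2) : ℝ))|
      ≤ 1 / 2 * ∫ t, |w t| * (m ^ (-(3/2) : ℝ) / 2 * |h|) := by
        gcongr
        exact norm_integral_le_of_norm_le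
          ((hw.integrable_of_hasCompactSupport hws).abs.mul_const _) (ae_of_all _ hbound)
    _ = (∫ t, |w t|) / 4 * |h| * m ^ (-(3/2) : ℝ) := by
        rw [integral_mul_const]; ring

end

theorem eventually_abs_sub_le_of_decay {φ : ℝ → ℝ} {K R : ℝ} (hK : 0 ≤ K)
    (hφ : ∀ x h, 2 * (R + |h|) ≤ |x| → |φ (x + h) - φ x| ≤ K * |h| * (|x| / 2) ^ (-(3/2) : ℝ))
    {H ε ρ : ℝ} (hε : 0 < ε) :
    ∀ᶠ k : ℤ in cofinite, ∀ h a r, |h| ≤ H → ε ≤ |a| → |r| ≤ ρ →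
      |φ (a * (k - r) + h) - φ (a * (k - r))| ≤
        K * H * (ε / 4) ^ (-(3/2) : ℝ) * |(k : ℝ)| ^ (-(3/2) : ℝ) := by
  have hk : Tendsto (fun k : ℤ => |(k : ℝ)|) cofinite atTop :=
    tendsto_norm_cocompact_atTop.comp Int.tendsto_coe_cofinite
  filter_upwards [hk.eventually_ge_atTop (max (max (2 * ρ) (4 * (R + H) / ε)) 1)]
    with k hkN h a r hh ha hr
  simp only [max_le_iff] at hkN
  obtain ⟨⟨hkρ, hkR⟩, hk1⟩ := hkN
  have hkx : ε * |(k : ℝ)| / 2 ≤ |a * (k - r)| := by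
    rw [abs_mul]
    have : |(k : ℝ)| - ρ ≤ |(k : ℝ) - r| := by linarith [abs_sub_abs_le_abs_sub (k : ℝ) r]
    nlinarith [abs_nonneg a]
  have hRx : 2 * (R + |h|) ≤ |a * (k - r)| := by
    rw [div_le_iff₀ hε] at hkR
    linarith
  calc |φ (a * (k - r) + h) - φ (a * (k - r))|
      ≤ K * |h| * (|a * (k - r)| / 2) ^ (-(3/2) : ℝ) := hφ _ _ hRx
    _ ≤ K * H * (ε / 4 * |(k : ℝ)|) ^ (-(3/2) : ℝ) := by
        have hεk : 0 < ε / 4 * |(k : ℝ)| := by positivity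
        exact mul_le_mul (mul_le_mul_of_nonneg_left hh hK)
          (rpow_le_rpow_of_nonpos hεk (by linarith) (by norm_num)) (by positivity)
          (mul_nonneg hK ((abs_nonneg h).trans hh))
    _ = K * H * (ε / 4) ^ (-(3/2) : ℝ) * |(k : ℝ)| ^ (-(3/2) : ℝ) := by
        rw [mul_rpow (by positivity) (abs_nonneg _)]; ring

theorem stmt_3_general (w : ℝ → ℝ) (hwSupp : HasCompactSupport w)
    (q : ℝ) (hq : 2 < q) (w' : ℝ → ℝ)
    (hw'Lq : MemLp w' (ENNReal.ofReal q) volume)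
    (hwAC : ∀ x : ℝ, w x = w 0 + ∫ t in (0:ℝ)..x, w' t) :
    ContinuousOn (fun p : ℝ × ℝ × ℝ => PsiF w p.1 p.2.1 p.2.2)
      {p : ℝ × ℝ × ℝ | p.2.1 ≠ 0} := by
  have hw : Continuous w := continuous_of_eq_add_integral
    (hw'Lq.locallyIntegrable (ENNReal.one_le_ofReal.mpr (by linarith))) hwAC
  obtain ⟨R, hR⟩ := hwSupp.exists_support_subset_Icc
  rintro ⟨h₀, a₀, r₀⟩ (ha₀ : a₀ ≠ 0)
  refine ContinuousAt.continuousWithinAt ?_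
  have hU : ∀ᶠ p : ℝ × ℝ × ℝ in 𝓝 (h₀, a₀, r₀),
      |p.1| < |h₀| + 1 ∧ |a₀| / 2 < |p.2.1| ∧ |p.2.2| < |r₀| + 1 := by
    refine (ContinuousAt.eventually_lt (by fun_prop) continuousAt_const ?_).and
      ((ContinuousAt.eventually_lt continuousAt_const (by fun_prop) ?_).and
        (ContinuousAt.eventually_lt (by fun_prop) continuousAt_const ?_)) <;> simp [ha₀]
  have hPsiF : (fun p : ℝ × ℝ × ℝ => PsiF w p.1 p.2.1 p.2.2) =ᶠ[𝓝 (h₀, a₀, r₀)]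
      fun p => ∑' k : ℤ, (psiF w (p.2.1 * (k - p.2.2) + p.1) - psiF w (p.2.1 * (k - p.2.2))) := by
    filter_upwards [hU] with p hp
    rw [PsiF, if_neg (abs_pos.mp (lt_of_le_of_lt (by positivity) hp.2.1))]
  have hterm := eventually_abs_sub_le_of_decay (by positivity)
    (fun x h hx => abs_psiF_add_sub_le hw hwSupp hR hx) (H := |h₀| + 1) (ρ := |r₀| + 1)
    (half_pos (abs_pos.mpr ha₀))
  refine ContinuousAt.congr ?_ hPsiF.symm
  refine continuousAt_tsum_of_eventually_norm_le (fun k => ?_)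
    ((summable_abs_int_rpow (b := 3/2) (by norm_num)).mul_left _) hU
    (hterm.mono fun k hk p hp => hk _ _ _ hp.1.le hp.2.1.le hp.2.2.le)
  have hψ := continuous_psiF hw hwSupp
  fun_prop

theorem stmt_3 (w : ℝ → ℝ) (hwSupp : HasCompactSupport w)
    (hwInt : ∫ p, w p = 1)
    (q : ℝ) (hq : 2 < q) (w' : ℝ → ℝ)
    (hw'Lq : MemLp w' (ENNReal.ofReal q) volume)
    (hwAC : ∀ x : ℝ, w x = w 0 + ∫ t in (0:ℝ)..x, w' t) :
    ContinuousOn (fun p : ℝ × ℝ × ℝ => PsiF w p.1 p.2.1 p.2.2)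
      {p : ℝ × ℝ × ℝ | p.2.1 ≠ 0} :=
  stmt_3_general w hwSupp q hq w' hw'Lq hwAC
end

section
/- For every a ≠ 0 and all h, r ∈ ℝ, the series defining Ψ converges absolutely: ∑_{k ∈ ℤ} |ψ(a(k − r) + h) − ψ(a(k − r))| < ∞. -/
/-!
Writing `ψ(x) = ½ ∫ w(y) K(y - x) dy` with `K(t) = t^{-1/2}` for `t > 0` (and `0` otherwise),
`ψ` vanishes to the right of the support of `w`. Far to the left, `y - x ≥ |x|/2` on the support
of `w`, where `K` has derivative `O(|x|^{-3/2})`; hence `ψ(x + h) - ψ(x) = O(|x|^{-3/2})` as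
`|x| → ∞`, and the samples along the lattice `a(ℤ - r)` are summable because `3/2 > 1`.
-/

open MeasureTheory Real Filter

open Set Function Asymptotics

noncomputable def invSqrtKernel : ℝ → ℝ := (Ioi 0).indicator fun t => t ^ (-(1/2) : ℝ)

lemma measurable_invSqrtKernel : Measurable invSqrtKernel :=
  (measurable_id.pow_const _).indicator measurableSet_Ioi

lemma invSqrtKernel_of_pos {t : ℝ} (ht : 0 < t) : invSqrtKernel t = t ^ (-(1/2) : ℝ) :=
  indicator_of_mem (mem_Ioi.mpr ht) _

lemma abs_invSqrtKernel_le {m t : ℝ} (hm : 0 < m) (ht : m ≤ t) :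
    |invSqrtKernel t| ≤ m ^ (-(1/2) : ℝ) := by
  rw [invSqrtKernel_of_pos (hm.trans_le ht), abs_of_nonneg (rpow_nonneg (hm.le.trans ht) _)]
  exact rpow_le_rpow_of_nonpos hm ht (by norm_num)

lemma abs_invSqrtKernel_sub_le {m u v : ℝ} (hm : 0 < m) (hu : m ≤ u) (hv : m ≤ v) :
    |invSqrtKernel u - invSqrtKernel v| ≤ 1/2 * m ^ (-(3/2) : ℝ) * |u - v| := by
  have hderiv : ∀ t ∈ Ici m, HasDerivWithinAt (fun t : ℝ => t ^ (-(1/2) : ℝ))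
      (-(1/2) * t ^ (-(1/2) - 1 : ℝ)) (Ici m) t := fun t ht =>
    (hasDerivAt_rpow_const (Or.inl (hm.trans_le ht).ne')).hasDerivWithinAt
  have hbound : ∀ t ∈ Ici m, ‖-(1/2) * t ^ (-(1/2) - 1 : ℝ)‖ ≤ 1/2 * m ^ (-(3/2) : ℝ) := by
    intro t (ht : m ≤ t)
    rw [norm_mul, norm_neg, norm_of_nonneg one_half_pos.le,
      norm_of_nonneg (rpow_nonneg (hm.le.trans ht) _), show (-(1/2) - 1 : ℝ) = -(3/2) by norm_num]
    exact mul_le_mul_of_nonneg_left (rpow_le_rpow_of_nonpos hm ht (by norm_num)) one_half_pos.le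
  have := (convex_Ici m).norm_image_sub_le_of_norm_hasDerivWithin_le hderiv hbound hv hu
  rwa [invSqrtKernel_of_pos (hm.trans_le hu), invSqrtKernel_of_pos (hm.trans_le hv)]

lemma psiF_eq_integral_mul_invSqrtKernel (w : ℝ → ℝ) (x : ℝ) :
    psiF w x = 1/2 * ∫ y, w y * invSqrtKernel (y - x) := by
  have hind : (fun p => w (x + p) * invSqrtKernel p) =
      (Ioi 0).indicator fun p => w (x + p) * p ^ (-(1/2) : ℝ) := by
    ext p
    by_cases hp : p ∈ Ioi 0 <;> simp [invSqrtKernel, hp]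
  rw [psiF, ← integral_add_left_eq_self (μ := volume) _ x]
  simp only [add_sub_cancel_left, hind, integral_indicator measurableSet_Ioi]

lemma psiF_eq_zero_of_support_subset_Iic {w : ℝ → ℝ} {U x : ℝ} (hU : support w ⊆ Iic U)
    (hx : U ≤ x) : psiF w x = 0 := by
  rw [psiF, setIntegral_eq_zero_of_forall_eq_zero, mul_zero]
  intro p (hp : 0 < p)
  rw [(notMem_support (f := w)).mp fun hxp => by linarith [mem_Iic.mp (hU hxp)], zero_mul]

lemma integrable_mul_invSqrtKernel {w : ℝ → ℝ} (hw : Integrable w) {L x : ℝ}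
    (hL : support w ⊆ Ici L) (hx : x < L) :
    Integrable fun y => w y * invSqrtKernel (y - x) := by
  refine (hw.abs.mul_const ((L - x) ^ (-(1/2) : ℝ))).mono'
    (hw.aestronglyMeasurable.mul (measurable_invSqrtKernel.comp
      (measurable_id.sub_const x)).aestronglyMeasurable) (ae_of_all _ fun y => ?_)
  rw [norm_mul, norm_eq_abs]
  by_cases hy : w y = 0
  · simp [hy]
  · exact mul_le_mul_of_nonneg_left
      (abs_invSqrtKernel_le (by linarith) (by linarith [mem_Ici.mp (hL hy)])) (abs_nonneg _)

lemma abs_psiF_add_sub_psiF_le {w : ℝ → ℝ} (hw : Integrable w) {L m x h : ℝ}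
    (hL : support w ⊆ Ici L) (hm : 0 < m) (hx : m ≤ L - x - |h|) :
    |psiF w (x + h) - psiF w x| ≤ (∫ y, |w y|) * |h| / 4 * m ^ (-(3/2) : ℝ) := by
  have hpt : ∀ y, ‖w y * invSqrtKernel (y - (x + h)) - w y * invSqrtKernel (y - x)‖ ≤
      |w y| * (1/2 * m ^ (-(3/2) : ℝ) * |h|) := by
    intro y
    rw [norm_eq_abs, ← mul_sub, abs_mul]
    by_cases hy : w y = 0
    · simp [hy]
    · have hyL : L ≤ y := hL hy
      have hK := abs_invSqrtKernel_sub_le hm (u := y - (x + h)) (v := y - x)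
        (by linarith [le_abs_self h]) (by linarith [abs_nonneg h])
      rw [show y - (x + h) - (y - x) = -h by ring, abs_neg] at hK
      exact mul_le_mul_of_nonneg_left hK (abs_nonneg _)
  rw [psiF_eq_integral_mul_invSqrtKernel, psiF_eq_integral_mul_invSqrtKernel, ← mul_sub,
    ← integral_sub (integrable_mul_invSqrtKernel hw hL (by linarith [le_abs_self h]))
      (integrable_mul_invSqrtKernel hw hL (by linarith [abs_nonneg h])), abs_mul]
  calc |(1/2 : ℝ)| * |∫ y, (w y * invSqrtKernel (y - (x + h)) - w y * invSqrtKernel (y - x))|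
      ≤ 1/2 * ∫ y, |w y| * (1/2 * m ^ (-(3/2) : ℝ) * |h|) := by
        rw [abs_of_pos one_half_pos]
        gcongr
        exact norm_integral_le_of_norm_le (hw.abs.mul_const _) (ae_of_all _ hpt)
    _ = (∫ y, |w y|) * |h| / 4 * m ^ (-(3/2) : ℝ) := by
        rw [integral_mul_const]
        ring

lemma psiF_add_sub_psiF_isBigO {w : ℝ → ℝ} (hw : Integrable w) (hsupp : HasCompactSupport w)
    (h : ℝ) : (fun x => psiF w (x + h) - psiF w x) =O[cocompact ℝ] fun x => |x| ^ (-(3/2) : ℝ) := by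
  obtain ⟨L, hL⟩ := hsupp.isCompact.bddBelow
  obtain ⟨U, hU⟩ := hsupp.isCompact.bddAbove
  rw [cocompact_eq_atBot_atTop]
  refine IsBigO.sup ?_ ?_
  · refine IsBigO.of_bound ((∫ y, |w y|) * |h| / 4 * 2 ^ (3/2 : ℝ)) ?_
    filter_upwards [eventually_le_atBot (2 * (L - |h|)), eventually_lt_atBot 0] with x hxL hx0
    have hbound := abs_psiF_add_sub_psiF_le hw (fun y hy => hL (subset_tsupport _ hy))
      (x := x) (h := h) (m := |x| / 2) (half_pos (abs_pos.mpr hx0.ne))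
      (by rw [abs_of_neg hx0]; linarith)
    rw [norm_eq_abs, norm_of_nonneg (rpow_nonneg (abs_nonneg _) _)]
    refine hbound.trans_eq ?_
    rw [div_rpow (abs_nonneg _) zero_le_two, rpow_neg zero_le_two]
    field_simp
  · refine EventuallyEq.trans_isBigO ?_ (isBigO_zero _ _)
    filter_upwards [eventually_ge_atTop (U + |h|)] with x hx
    have hUw : support w ⊆ Iic U := fun y hy => hU (subset_tsupport _ hy)
    rw [psiF_eq_zero_of_support_subset_Iic hUw (by linarith [neg_abs_le h]),
      psiF_eq_zero_of_support_subset_Iic hUw (by linarith [abs_nonneg h]), sub_zero]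

lemma summable_int_comp_mul_sub_of_isBigO {E : Type*} [NormedAddCommGroup E] [CompleteSpace E]
    {f : ℝ → E} {s : ℝ} (hs : 1 < s)
    (hf : f =O[cocompact ℝ] fun x => |x| ^ (-s)) {a : ℝ} (ha : a ≠ 0) (r : ℝ) :
    Summable fun k : ℤ => f (a * ((k : ℝ) - r)) := by
  have htend : Tendsto (fun k : ℤ => a * ((k : ℝ) - r)) cofinite (cocompact ℝ) :=
    (tendsto_cocompact_mul_left₀ ha).comp
      (Tendsto.comp (Homeomorph.subRight r).map_cocompact.le Int.tendsto_coe_cofinite)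
  refine summable_of_isBigO ?_ (hf.comp_tendsto htend)
  refine (((summable_one_div_int_add_rpow (-r) s).mpr hs).mul_left (|a| ^ (-s))).congr
    fun k => ?_
  simp [abs_mul, mul_rpow, rpow_neg, sub_eq_add_neg, mul_comm]

lemma MeasureTheory.LocallyIntegrable.continuous_of_forall_eq_add_integral {E : Type*}
    [NormedAddCommGroup E] [NormedSpace ℝ E] {f g : ℝ → E}
    (hg : LocallyIntegrable g) (c : ℝ) (hf : ∀ x, f x = f c + ∫ t in c..x, g t) :
    Continuous f :=
  (continuous_const.add (intervalIntegral.continuous_primitive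
    (fun _ _ => (hg.integrableOn_isCompact isCompact_uIcc).intervalIntegrable) c)).congr
    fun x => (hf x).symm

theorem stmt_9_general (w : ℝ → ℝ) (hwSupp : HasCompactSupport w)
    (q : ℝ) (hq : 2 < q) (w' : ℝ → ℝ)
    (hw'Lq : MemLp w' (ENNReal.ofReal q) volume)
    (hwAC : ∀ x : ℝ, w x = w 0 + ∫ t in (0:ℝ)..x, w' t) :
    ∀ (a : ℝ), a ≠ 0 → ∀ (h r : ℝ),
      Summable (fun k : ℤ => |psiF w (a * ((k : ℝ) - r) + h) - psiF w (a * ((k : ℝ) - r))|) := by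
  intro a ha h r
  have hw'loc : LocallyIntegrable w' :=
    hw'Lq.locallyIntegrable (ENNReal.one_le_ofReal.mpr (by linarith))
  have hw : Integrable w :=
    (hw'loc.continuous_of_forall_eq_add_integral 0 hwAC).integrable_of_hasCompactSupport hwSupp
  exact (summable_int_comp_mul_sub_of_isBigO (by norm_num)
    (psiF_add_sub_psiF_isBigO hw hwSupp h) ha r).abs

theorem stmt_9 (w : ℝ → ℝ) (hwSupp : HasCompactSupport w)
    (hwInt : ∫ p, w p = 1)
    (q : ℝ) (hq : 2 < q) (w' : ℝ → ℝ)
    (hw'Lq : MemLp w' (ENNReal.ofReal q) volume)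
    (hwAC : ∀ x : ℝ, w x = w 0 + ∫ t in (0:ℝ)..x, w' t) :
    ∀ (a : ℝ), a ≠ 0 → ∀ (h r : ℝ),
      Summable (fun k : ℤ => |psiF w (a * ((k : ℝ) - r) + h) - psiF w (a * ((k : ℝ) - r))|) :=
  stmt_9_general w hwSupp q hq w' hw'Lq hwAC
end

section
/- Suppose the support of w is contained in [−c, c] for some c > 0. Then ψ is C^∞ on the ray (−∞, −c), and for every integer n ≥ 0 there exists a constant C_n such that |ψ^{(n)}(q̂) − ((2n−1)!!/2^{n+1}) (−q̂)^{−1/2−n}| ≤ C_n |q̂|^{−3/2−n} for all q̂ ≤ −c − 1, where (−1)!! := 1; in particular ψ^{(n)}(q̂) = c_n(−q̂)^{−1/2−n} + O(|q̂|^{−3/2−n}) as q̂ → −∞ with c_n = (2n−1)!!/2^{n+1}. -/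
open MeasureTheory Real Filter

namespace Stmt12Aux

/-- MVT bound for rpow with negative exponent. -/
lemma rpow_mvt {a m x y : ℝ} (hm : 0 < m) (hx : m ≤ x) (hy : m ≤ y) (ha : a ≤ 0) :
    |x ^ a - y ^ a| ≤ |a| * m ^ (a - 1) * |x - y| := by
  have key : ∀ t ∈ Set.Ici m, HasDerivWithinAt (fun t : ℝ => t ^ a)
      (a * t ^ (a - 1)) (Set.Ici m) t := by
    intro t ht
    exact (Real.hasDerivAt_rpow_const (Or.inl (by
      have : 0 < t := lt_of_lt_of_le hm ht
      exact ne_of_gt this))).hasDerivWithinAt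
  have bound : ∀ t ∈ Set.Ici m, ‖a * t ^ (a - 1)‖ ≤ |a| * m ^ (a - 1) := by
    intro t ht
    rw [norm_mul, Real.norm_eq_abs, Real.norm_eq_abs,
      abs_of_nonneg (Real.rpow_nonneg (le_of_lt (lt_of_lt_of_le hm ht)) _)]
    have := Real.rpow_le_rpow_of_nonpos hm ht (by linarith : a - 1 ≤ 0)
    exact mul_le_mul_of_nonneg_left this (abs_nonneg a)
  have := (convex_Ici m).norm_image_sub_le_of_norm_hasDerivWithin_le key bound hy hx
  simpa [Real.norm_eq_abs] using this

section

variable {w : ℝ → ℝ} {c : ℝ}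

lemma wzero (hsupp : Function.support w ⊆ Set.Icc (-c) c) {u : ℝ} (hu : u < -c) :
    w u = 0 := by
  by_contra h
  have := (hsupp h).1
  linarith

lemma meas_aux (hwInt : Integrable w volume) (a q : ℝ) :
    AEStronglyMeasurable (fun u => w u * (u - q) ^ a) volume :=
  hwInt.1.mul (((measurable_id.sub_const q).pow measurable_const).aestronglyMeasurable)

lemma int_aux (hwInt : Integrable w volume)
    (hsupp : Function.support w ⊆ Set.Icc (-c) c)
    {a : ℝ} (ha : a ≤ 0) {q : ℝ} (hq : q < -c) :
    Integrable (fun u => w u * (u - q) ^ a) volume := by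
  refine Integrable.mono' ((hwInt.abs).mul_const ((-c - q) ^ a)) (meas_aux hwInt a q)
    (Eventually.of_forall fun u => ?_)
  by_cases hwu : w u = 0
  · simp [hwu]
  · have hu := hsupp hwu
    have h1 : (0:ℝ) < -c - q := by linarith
    have h2 : -c - q ≤ u - q := by linarith [hu.1]
    rw [norm_mul, Real.norm_eq_abs, Real.norm_eq_abs,
      abs_of_nonneg (Real.rpow_nonneg (by linarith : (0:ℝ) ≤ u - q) _)]
    exact mul_le_mul_of_nonneg_left (Real.rpow_le_rpow_of_nonpos h1 h2 ha) (abs_nonneg _)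

lemma hasDeriv_aux (hwInt : Integrable w volume)
    (hsupp : Function.support w ⊆ Set.Icc (-c) c)
    {a : ℝ} (ha : a ≤ 0) {q : ℝ} (hq : q < -c) :
    HasDerivAt (fun x => ∫ u, w u * (u - x) ^ a)
      ((-a) * ∫ u, w u * (u - q) ^ (a - 1)) q := by
  set ε := (-c - q) / 2 with hε
  have εpos : 0 < ε := by
    rw [hε]; linarith
  have hball : ∀ x ∈ Metric.ball q ε, ∀ u : ℝ, w u ≠ 0 → ε ≤ u - x := by
    intro x hx u hu
    have hx' : |x - q| < ε := by simpa [Real.dist_eq] using hx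
    have : x - q < ε := (abs_lt.1 hx').2
    have hu1 := (hsupp hu).1
    rw [hε] at this ⊢
    linarith
  have key := hasDerivAt_integral_of_dominated_loc_of_deriv_le (μ := volume)
      (F := fun x u => w u * (u - x) ^ a)
      (F' := fun x u => w u * ((-a) * (u - x) ^ (a - 1)))
      (bound := fun u => |w u| * (|a| * ε ^ (a - 1))) (Metric.ball_mem_nhds q εpos)
      (Eventually.of_forall fun x => meas_aux hwInt a x)
      (int_aux hwInt hsupp ha hq)
      (hwInt.1.mul ((measurable_const.mul
        ((measurable_id.sub_const q).pow measurable_const)).aestronglyMeasurable))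
      (Eventually.of_forall ?_) ((hwInt.abs).mul_const _)
      (Eventually.of_forall ?_)
  · have h2 := key.2
    have : (∫ u, w u * ((-a) * (u - q) ^ (a - 1)))
        = (-a) * ∫ u, w u * (u - q) ^ (a - 1) := by
      rw [← integral_const_mul]
      congr 1
      funext u
      ring
    rwa [this] at h2
  · -- bound
    intro u x hx
    by_cases hwu : w u = 0
    · simp [hwu]
    · have hε' : ε ≤ u - x := hball x hx u hwu
      have hux : (0:ℝ) < u - x := lt_of_lt_of_le εpos hε'
      rw [norm_mul, norm_mul, Real.norm_eq_abs, Real.norm_eq_abs, Real.norm_eq_abs,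
        abs_neg, abs_of_nonneg (Real.rpow_nonneg hux.le _)]
      refine mul_le_mul_of_nonneg_left ?_ (abs_nonneg _)
      exact mul_le_mul_of_nonneg_left
        (Real.rpow_le_rpow_of_nonpos εpos hε' (by linarith : a - 1 ≤ 0)) (abs_nonneg _)
  · -- differentiability
    intro u x hx
    by_cases hwu : w u = 0
    · simp only [hwu, zero_mul]
      exact hasDerivAt_const _ _
    · have hε' : ε ≤ u - x := hball x hx u hwu
      have hne : u - x ≠ 0 := ne_of_gt (lt_of_lt_of_le εpos hε')
      have hsub : HasDerivAt (fun y : ℝ => u - y) (-1 : ℝ) x := (hasDerivAt_id x).const_sub u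
      have h1 := hsub.rpow_const (p := a) (Or.inl hne)
      have h2 := h1.const_mul (w u)
      exact h2.congr_deriv (by ring)

lemma psi_eq (hsupp : Function.support w ⊆ Set.Icc (-c) c) {q : ℝ} (hq : q < -c) :
    psiF w q = (1/2) * ∫ u, w u * (u - q) ^ (-(1/2) : ℝ) := by
  unfold psiF
  congr 1
  rw [setIntegral_eq_integral_of_forall_compl_eq_zero (fun p hp => ?_)]
  · have : ∀ p : ℝ, w (q + p) * p ^ (-(1/2) : ℝ)
        = (fun u => w u * (u - q) ^ (-(1/2) : ℝ)) (q + p) := by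
      intro p; simp [add_sub_cancel_left]
    simp_rw [this]
    exact integral_add_left_eq_self (fun u => w u * (u - q) ^ (-(1/2) : ℝ)) q
  · have hp0 : p ≤ 0 := by simpa using hp
    have : q + p < -c := by linarith
    rw [wzero hsupp this, zero_mul]

noncomputable def dcoef (n : ℕ) : ℝ :=
  (Nat.doubleFactorial (2 * n - 1) : ℝ) / 2 ^ (n + 1)

lemma dcoef_nonneg (n : ℕ) : 0 ≤ dcoef n := by
  unfold dcoef; positivity

lemma dcoef_succ (n : ℕ) : dcoef (n + 1) = dcoef n * ((n : ℝ) + 1/2) := by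
  cases n with
  | zero => norm_num [dcoef, Nat.doubleFactorial]
  | succ k =>
    unfold dcoef
    have h1 : 2 * (k + 1 + 1) - 1 = 2 * k + 1 + 2 := by omega
    have h2 : 2 * (k + 1) - 1 = 2 * k + 1 := by omega
    rw [h1, h2, Nat.doubleFactorial_add_two]
    push_cast
    ring

lemma iter_eq (hwInt : Integrable w volume) (hc : 0 < c)
    (hsupp : Function.support w ⊆ Set.Icc (-c) c) (n : ℕ) :
    ∀ q ∈ Set.Iio (-c), iteratedDerivWithin n (psiF w) (Set.Iio (-c)) q
      = dcoef n * ∫ u, w u * (u - q) ^ (-(1/2) - (n : ℝ)) := by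
  induction n with
  | zero =>
    intro q hq
    rw [iteratedDerivWithin_zero, psi_eq hsupp hq]
    norm_num [dcoef, Nat.doubleFactorial]
  | succ n ih =>
    intro q hq
    have hq' : q < -c := hq
    have heq : iteratedDerivWithin n (psiF w) (Set.Iio (-c))
        =ᶠ[nhds q] fun x => dcoef n * ∫ u, w u * (u - x) ^ (-(1/2) - (n : ℝ)) := by
      filter_upwards [isOpen_Iio.mem_nhds hq] with x hx
      exact ih x hx
    have hDeriv : HasDerivAt
        (fun x => dcoef n * ∫ u, w u * (u - x) ^ (-(1/2) - (n : ℝ)))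
        (dcoef n * (((1/2) + (n : ℝ)) * ∫ u, w u * (u - q) ^ ((-(1/2) - (n : ℝ)) - 1))) q := by
      have h := (hasDeriv_aux hwInt hsupp
        (by nlinarith [Nat.cast_nonneg (α := ℝ) n] : (-(1/2) - (n : ℝ)) ≤ 0) hq').const_mul (dcoef n)
      exact h.congr_deriv (by ring)
    rw [iteratedDerivWithin_succ,
      derivWithin_of_isOpen isOpen_Iio hq, heq.deriv_eq, hDeriv.deriv]
    have hexp : (-(1/2) - (n : ℝ)) - 1 = -(1/2) - ((n : ℕ) + 1 : ℕ) := by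
      push_cast; ring
    rw [hexp, dcoef_succ]
    push_cast
    ring

noncomputable def PhiC (w : ℝ → ℝ) (z : ℂ) : ℂ :=
  ∫ u, (w u : ℂ) * ((u : ℂ) - z) ^ (-(1/2) : ℂ)

lemma measC (hwInt : Integrable w volume) (p : ℂ) (z : ℂ) :
    AEStronglyMeasurable (fun u : ℝ => (w u : ℂ) * ((u : ℂ) - z) ^ p) volume :=
  (Complex.continuous_ofReal.comp_aestronglyMeasurable hwInt.1).mul
    (((Complex.measurable_ofReal.sub_const z).pow measurable_const).aestronglyMeasurable)

lemma normC_le {z : ℂ} {u m : ℝ} (hm : 0 < m) (hre : m ≤ u - z.re) (p : ℂ)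
    (hp : p.im = 0) (hpre : p.re ≤ 0) :
    ‖((u : ℂ) - z) ^ p‖ ≤ m ^ p.re := by
  have h1 : m ≤ ‖(u : ℂ) - z‖ := by
    refine le_trans ?_ (Complex.re_le_norm _)
    simpa using hre
  calc ‖((u : ℂ) - z) ^ p‖
      ≤ ‖(u : ℂ) - z‖ ^ p.re / Real.exp (Complex.arg ((u : ℂ) - z) * p.im) :=
        Complex.norm_cpow_le _ _
    _ = ‖(u : ℂ) - z‖ ^ p.re := by rw [hp]; simp
    _ ≤ m ^ p.re := Real.rpow_le_rpow_of_nonpos hm h1 hpre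

lemma intC (hwInt : Integrable w volume) (hsupp : Function.support w ⊆ Set.Icc (-c) c)
    {p : ℂ} (hp : p.im = 0) (hpre : p.re ≤ 0) {z : ℂ} (hz : z.re < -c) :
    Integrable (fun u : ℝ => (w u : ℂ) * ((u : ℂ) - z) ^ p) volume := by
  refine Integrable.mono' ((hwInt.abs).mul_const ((-c - z.re) ^ p.re)) (measC hwInt p z)
    (Eventually.of_forall fun u => ?_)
  by_cases hwu : w u = 0
  · simp [hwu]
  · have hu := hsupp hwu
    have hm : (0:ℝ) < -c - z.re := by linarith
    rw [norm_mul, Complex.norm_real, Real.norm_eq_abs]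
    exact mul_le_mul_of_nonneg_left
      (normC_le hm (by linarith [hu.1]) p hp hpre) (abs_nonneg _)

lemma diffC (hwInt : Integrable w volume) (hsupp : Function.support w ⊆ Set.Icc (-c) c)
    {z₀ : ℂ} (hz : z₀.re < -c) :
    DifferentiableAt ℂ (PhiC w) z₀ := by
  set ε := (-c - z₀.re) / 2 with hε
  have εpos : 0 < ε := by rw [hε]; linarith
  have hball : ∀ z ∈ Metric.ball z₀ ε, ∀ u : ℝ, w u ≠ 0 → ε ≤ u - z.re := by
    intro z hz' u hu
    have h1 : ‖z - z₀‖ < ε := by simpa [Complex.dist_eq] using hz'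
    have h2 : z.re - z₀.re ≤ ‖z - z₀‖ := by
      simpa using Complex.re_le_norm (z - z₀)
    have hu1 := (hsupp hu).1
    rw [hε] at h1 ⊢
    linarith
  have him : ((-(1/2) : ℂ) - 1).im = 0 := by norm_num
  have hre2 : ((-(1/2) : ℂ) - 1).re = -(3/2) := by norm_num
  have key := hasDerivAt_integral_of_dominated_loc_of_deriv_le (μ := volume) (𝕜 := ℂ)
      (F := fun z u => (w u : ℂ) * ((u : ℂ) - z) ^ (-(1/2) : ℂ))
      (F' := fun z u => (w u : ℂ) * ((-(1/2) : ℂ) * ((u : ℂ) - z) ^ ((-(1/2) : ℂ) - 1) * (-1)))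
      (bound := fun u => |w u| * ((1/2) * ε ^ (-(3/2) : ℝ))) (Metric.ball_mem_nhds z₀ εpos)
      (Eventually.of_forall fun z => measC hwInt _ z)
      (intC hwInt hsupp (by norm_num) (by norm_num) hz)
      ?_
      (Eventually.of_forall ?_) ((hwInt.abs).mul_const _)
      (Eventually.of_forall ?_)
  · exact key.2.differentiableAt
  · -- measurability of F' z₀
    exact ((measC hwInt ((-(1/2) : ℂ) - 1) z₀).const_mul (1/2 : ℂ)).congr
      (Eventually.of_forall fun u => by ring)
  · -- bound
    intro u z hz'
    by_cases hwu : w u = 0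
    · simp [hwu]
    · have hε' : ε ≤ u - z.re := hball z hz' u hwu
      have h12 : ‖(-(1/2) : ℂ)‖ = 1/2 := by
        rw [show (-(1/2) : ℂ) = ((-(1/2) : ℝ) : ℂ) by push_cast; ring, Complex.norm_real]
        norm_num
      have hx := normC_le εpos hε' ((-(1/2) : ℂ) - 1) him (by rw [hre2]; norm_num)
      rw [hre2] at hx
      calc ‖(w u : ℂ) * ((-(1/2) : ℂ) * ((u : ℂ) - z) ^ ((-(1/2) : ℂ) - 1) * (-1))‖
          = |w u| * ((1/2) * ‖((u : ℂ) - z) ^ ((-(1/2) : ℂ) - 1)‖) := by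
            rw [norm_mul, norm_mul, norm_mul, Complex.norm_real, Real.norm_eq_abs, h12,
              norm_neg, norm_one, mul_one]
        _ ≤ |w u| * ((1/2) * ε ^ (-(3/2) : ℝ)) := by
            refine mul_le_mul_of_nonneg_left (mul_le_mul_of_nonneg_left hx (by norm_num))
              (abs_nonneg _)
  · -- differentiability
    intro u z hz'
    by_cases hwu : w u = 0
    · simp only [hwu, Complex.ofReal_zero, zero_mul]
      exact hasDerivAt_const _ _
    · have hε' : ε ≤ u - z.re := hball z hz' u hwu
      have h0 : ((u : ℂ) - z) ∈ Complex.slitPlane := by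
        refine Complex.mem_slitPlane_iff.mpr (Or.inl ?_)
        simpa using lt_of_lt_of_le εpos hε'
      have hsub : HasDerivAt (fun y : ℂ => (u : ℂ) - y) (-1 : ℂ) z :=
        (hasDerivAt_id z).const_sub ((u : ℝ) : ℂ)
      exact (hsub.cpow_const h0).const_mul ((w u : ℝ) : ℂ)

lemma psi_eq_phi (hwInt : Integrable w volume)
    (hsupp : Function.support w ⊆ Set.Icc (-c) c) {q : ℝ} (hq : q < -c) :
    psiF w q = (1/2) * (PhiC w (q : ℂ)).re := by
  rw [psi_eq hsupp hq]
  congr 1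
  have h2 : ∫ u, ((w u * (u - q) ^ (-(1/2) : ℝ) : ℝ) : ℂ)
      = ((∫ u, w u * (u - q) ^ (-(1/2) : ℝ) : ℝ) : ℂ) := integral_ofReal
  have hPhi : PhiC w (q : ℂ) = ((∫ u, w u * (u - q) ^ (-(1/2) : ℝ) : ℝ) : ℂ) := by
    rw [PhiC, ← h2]
    congr 1
    funext u
    by_cases hwu : w u = 0
    · simp [hwu]
    · have hu := hsupp hwu
      have h0 : (0:ℝ) ≤ u - q := by linarith [hu.1]
      rw [Complex.ofReal_mul, Complex.ofReal_cpow h0]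
      push_cast
      ring
  rw [hPhi, Complex.ofReal_re]

end

end Stmt12Aux

open Stmt12Aux

theorem stmt_12 (w : ℝ → ℝ) (hwInt : Integrable w volume)
    (hwSupp : HasCompactSupport w) (hwOne : ∫ p, w p = 1)
    (c : ℝ) (hc : 0 < c) (hsupp : Function.support w ⊆ Set.Icc (-c) c) :
    ContDiffOn ℝ (⊤ : ℕ∞) (psiF w) (Set.Iio (-c)) ∧
    ∀ n : ℕ, ∃ C : ℝ, ∀ qhat : ℝ, qhat ≤ -c - 1 →
      |iteratedDerivWithin n (psiF w) (Set.Iio (-c)) qhat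
          - ((Nat.doubleFactorial (2 * n - 1) : ℝ) / 2 ^ (n + 1))
            * (-qhat) ^ (-(1/2) - (n : ℝ))|
        ≤ C * |qhat| ^ (-(3/2) - (n : ℝ)) := by
  constructor
  · have hSopen : IsOpen {z : ℂ | z.re < -c} := isOpen_lt Complex.continuous_re continuous_const
    have hdiff : DifferentiableOn ℂ (PhiC w) {z : ℂ | z.re < -c} :=
      fun z hz => (diffC hwInt hsupp hz).differentiableWithinAt
    have hAnal : AnalyticOnNhd ℂ (PhiC w) {z : ℂ | z.re < -c} :=
      hdiff.analyticOnNhd hSopen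
    have h1 : AnalyticOnNhd ℝ (PhiC w) {z : ℂ | z.re < -c} := hAnal.restrictScalars
    have h2 : AnalyticOnNhd ℝ (fun q : ℝ => (q : ℂ)) (Set.Iio (-c)) :=
      Complex.ofRealCLM.analyticOnNhd _
    have h3 : AnalyticOnNhd ℝ (fun q : ℝ => PhiC w (q : ℂ)) (Set.Iio (-c)) :=
      h1.comp h2 fun q hq => by simpa using hq
    have h4 : AnalyticOnNhd ℝ (fun q : ℝ => (PhiC w (q : ℂ)).re) (Set.Iio (-c)) :=
      (Complex.reCLM.analyticOnNhd Set.univ).comp h3 (Set.mapsTo_univ _ _)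
    have h5 : AnalyticOnNhd ℝ (fun q : ℝ => (1/2) * (PhiC w (q : ℂ)).re) (Set.Iio (-c)) :=
      analyticOnNhd_const.mul h4
    exact (h5.contDiffOn isOpen_Iio.uniqueDiffOn).congr
      fun q hq => psi_eq_phi hwInt hsupp hq
  · intro n
    set a : ℝ := -(1/2) - (n : ℝ) with ha
    have ha0 : a ≤ 0 := by
      rw [ha]; nlinarith [Nat.cast_nonneg (α := ℝ) n]
    set K : ℝ := |a| * c * (c + 1) ^ (1 - a) with hK
    refine ⟨dcoef n * (∫ u, |w u|) * K, fun q hq => ?_⟩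
    have hq' : q < -c := by linarith
    rw [show ((Nat.doubleFactorial (2 * n - 1) : ℝ) / 2 ^ (n + 1)) = dcoef n from rfl,
      iter_eq hwInt hc hsupp n q hq']
    have hint1 : Integrable (fun u => w u * (u - q) ^ a) volume :=
      int_aux hwInt hsupp ha0 hq'
    have hint2 : Integrable (fun u => w u * (-q) ^ a) volume := hwInt.mul_const _
    have key : dcoef n * (∫ u, w u * (u - q) ^ a) - dcoef n * (-q) ^ a
        = dcoef n * ∫ u, (w u * (u - q) ^ a - w u * (-q) ^ a) := by
      rw [integral_sub hint1 hint2, integral_mul_const, hwOne, one_mul, mul_sub]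
    rw [key, abs_mul, abs_of_nonneg (dcoef_nonneg n)]
    set B : ℝ := |q| ^ (a - 1) with hB
    have hbd : ∀ u, ‖w u * (u - q) ^ a - w u * (-q) ^ a‖ ≤ |w u| * (K * B) := by
      intro u
      rw [← mul_sub, Real.norm_eq_abs, abs_mul]
      by_cases hwu : w u = 0
      · simp [hwu]
      · have hu := hsupp hwu
        have hm : (0:ℝ) < -c - q := by linarith
        have h1 : -c - q ≤ u - q := by linarith [hu.1]
        have h2 : -c - q ≤ -q := by linarith
        have mvt := rpow_mvt hm h1 h2 ha0
        have habsu : |(u - q) - (-q)| ≤ c := by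
          rw [show (u - q) - (-q) = u by ring]
          exact abs_le.2 ⟨hu.1, hu.2⟩
        have hq0 : q < 0 := by linarith
        have hdiv : |q| / (c + 1) ≤ -c - q := by
          rw [abs_of_neg hq0, div_le_iff₀ (by linarith : (0:ℝ) < c + 1)]
          nlinarith
        have hmle : (-c - q) ^ (a - 1) ≤ (c + 1) ^ (1 - a) * B := by
          have h3 := Real.rpow_le_rpow_of_nonpos
            (show (0:ℝ) < |q| / (c + 1) by
              have : (0:ℝ) < |q| := abs_pos.2 (ne_of_lt hq0)
              positivity) hdiv (by linarith : a - 1 ≤ 0)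
          have h4 : (|q| / (c + 1)) ^ (a - 1) = (c + 1) ^ (1 - a) * B := by
            rw [hB, Real.div_rpow (abs_nonneg q) (by linarith : (0:ℝ) ≤ c + 1),
              div_eq_mul_inv, ← Real.rpow_neg (by linarith : (0:ℝ) ≤ c + 1), neg_sub]
            ring
          rw [← h4]
          exact h3
        have hstep : |(u - q) ^ a - (-q) ^ a| ≤ K * B := by
          calc |(u - q) ^ a - (-q) ^ a| ≤ |a| * (-c - q) ^ (a - 1) * |(u - q) - (-q)| := mvt
            _ ≤ |a| * ((c + 1) ^ (1 - a) * B) * c := by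
                have hBpos : (0:ℝ) ≤ (-c - q) ^ (a - 1) := Real.rpow_nonneg hm.le _
                gcongr
            _ = K * B := by rw [hK]; ring
        exact mul_le_mul_of_nonneg_left hstep (abs_nonneg _)
    have hnorm : |∫ u, (w u * (u - q) ^ a - w u * (-q) ^ a)| ≤ (∫ u, |w u|) * (K * B) := by
      have h := norm_integral_le_of_norm_le (μ := volume)
        ((hwInt.abs).mul_const (K * B)) (Eventually.of_forall hbd)
      rwa [integral_mul_const, Real.norm_eq_abs] at h
    have hfin : dcoef n * |∫ u, (w u * (u - q) ^ a - w u * (-q) ^ a)|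
        ≤ dcoef n * (∫ u, |w u|) * K * B := by
      have := mul_le_mul_of_nonneg_left hnorm (dcoef_nonneg n)
      nlinarith [this]
    rw [show (-(3/2) - (n : ℝ)) = a - 1 by rw [ha]; ring]
    exact hfin
end

section
/- Let φ₃ ∈ C^∞(ℝ) satisfy φ₃^{(l)}(s) = O(|s|^{1/2−l}) as |s| → ∞ for l = 0, 1, 2. Then for every c > 0 there exists C > 0 such that for all q with |q| ≤ c and all Δq with 0 < |Δq| ≤ 1, the principal value integral p.v.∫_ℝ s^{−1}[φ₃'(s + q + Δq) − φ₃'(s + q)] ds (defined as the limit as δ → 0⁺ and A → ∞ of ∫_{δ ≤ |s| ≤ A} s^{−1}[φ₃'(s + q + Δq) − φ₃'(s + q)] ds) exists and satisfies |p.v.∫_ℝ s^{−1}[φ₃'(s + q + Δq) − φ₃'(s + q)] ds| ≤ C|Δq|. -/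
open MeasureTheory Real Filter

-- aux 1: odd function integral over symmetric set
lemma odd_set_inv_integral_zero (D : Set ℝ) (hD : MeasurableSet D)
    (hsym : ∀ s : ℝ, -s ∈ D ↔ s ∈ D) :
    ∫ s in D, s⁻¹ = 0 := by
  have h1 : ∫ s in D, s⁻¹ = ∫ s, D.indicator (fun t => t⁻¹) s := (integral_indicator hD).symm
  have h2 : ∀ x : ℝ, D.indicator (fun t => t⁻¹) (-x) = - D.indicator (fun t => t⁻¹) x := by
    intro x
    by_cases hx : x ∈ D
    · rw [Set.indicator_of_mem hx, Set.indicator_of_mem ((hsym x).mpr hx)]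
      exact inv_neg
    · rw [Set.indicator_of_notMem hx, Set.indicator_of_notMem (fun h => hx ((hsym x).mp h))]
      simp
  have h3 : ∫ x : ℝ, D.indicator (fun t => t⁻¹) (-x) = ∫ x, D.indicator (fun t => t⁻¹) x :=
    integral_neg_eq_self _ _
  rw [h1]
  have h4 : ∫ x : ℝ, D.indicator (fun t => t⁻¹) (-x) = - ∫ x, D.indicator (fun t => t⁻¹) x := by
    simp_rw [h2]; exact integral_neg _
  linarith [h3, h4]

-- aux 2: the majorant is integrable
lemma psi_integrable (T M c' : ℝ) (hT : 0 < T) :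
    Integrable (fun s : ℝ => if |s| ≤ T then M else c' * |s| ^ (-(3:ℝ)/2)) := by
  set ψ : ℝ → ℝ := fun s => if |s| ≤ T then M else c' * |s| ^ (-(3:ℝ)/2) with hψ
  have hUnion : (Set.univ : Set ℝ) = Set.Iio (-T) ∪ (Set.Icc (-T) T ∪ Set.Ioi T) := by
    ext s; simp only [Set.mem_univ, Set.mem_union, Set.mem_Iio, Set.mem_Icc, Set.mem_Ioi, true_iff]
    rcases lt_trichotomy s (-T) with h | h | h
    · exact Or.inl h
    · exact Or.inr (Or.inl ⟨h.ge, by linarith⟩)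
    · rcases le_or_gt s T with h2 | h2
      · exact Or.inr (Or.inl ⟨by linarith, h2⟩)
      · exact Or.inr (Or.inr h2)
  have hIoi : IntegrableOn ψ (Set.Ioi T) := by
    have h1 : IntegrableOn (fun s : ℝ => c' * s ^ (-(3:ℝ)/2)) (Set.Ioi T) :=
      (integrableOn_Ioi_rpow_of_lt (by norm_num) hT).const_mul c'
    refine h1.congr_fun (fun s hs => ?_) measurableSet_Ioi
    have hs' : T < s := hs
    rw [hψ]
    simp only
    rw [if_neg (by rw [abs_of_pos (hT.trans hs')]; linarith), abs_of_pos (hT.trans hs')]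
  have hIio : IntegrableOn ψ (Set.Iio (-T)) := by
    have key : IntegrableOn (ψ ∘ (fun x : ℝ => -x)) ((fun x : ℝ => -x) ⁻¹' (Set.Ioi T)) :=
      ((Measure.measurePreserving_neg (volume : Measure ℝ)).integrableOn_comp_preimage
        (Homeomorph.neg ℝ).measurableEmbedding).2 hIoi
    have hpre : ((fun x : ℝ => -x) ⁻¹' (Set.Ioi T)) = Set.Iio (-T) := by
      ext x; simp [lt_neg]
    rw [hpre] at key
    refine key.congr_fun (fun s _ => ?_) measurableSet_Iio
    simp only [Function.comp, ψ, abs_neg]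
  have hIcc : IntegrableOn ψ (Set.Icc (-T) T) := by
    have : IntegrableOn (fun _ : ℝ => M) (Set.Icc (-T) T) := integrableOn_const (by simp) (by simp)
    refine this.congr_fun (fun s hs => ?_) measurableSet_Icc
    rw [hψ]; simp only
    rw [if_pos (abs_le.2 ⟨hs.1, hs.2⟩)]
  have := (hIio.union (hIcc.union hIoi))
  rwa [← hUnion, integrableOn_univ] at this

-- aux 3: the PV machinery
lemma pv_aux (h F : ℝ → ℝ) (b : ℝ) (hF : Integrable F)
    (heq : ∀ s : ℝ, s ≠ 0 → h s = F s + (if |s| ≤ 1 then b * s⁻¹ else 0)) :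
    Tendsto (fun p : ℝ × ℝ => ∫ s in {s : ℝ | p.1 ≤ |s| ∧ |s| ≤ p.2}, h s)
      ((nhdsWithin (0:ℝ) (Set.Ioi 0)) ×ˢ atTop) (nhds (∫ s, F s)) := by
  set filt := (nhdsWithin (0:ℝ) (Set.Ioi 0)) ×ˢ (atTop : Filter ℝ) with hfilt
  set S : ℝ × ℝ → Set ℝ := fun p => {s : ℝ | p.1 ≤ |s| ∧ |s| ≤ p.2} with hSdef
  have hS : ∀ p : ℝ × ℝ, MeasurableSet (S p) := by
    intro p
    exact (measurableSet_le measurable_const continuous_abs.measurable).inter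
      (measurableSet_le continuous_abs.measurable measurable_const)
  have hB1 : MeasurableSet {t : ℝ | |t| ≤ 1} :=
    measurableSet_le continuous_abs.measurable measurable_const
  -- Step A : dominated convergence for the indicator integrals
  have hA : Tendsto (fun p : ℝ × ℝ => ∫ s, (S p).indicator F s) filt (nhds (∫ s, F s)) := by
    refine tendsto_integral_filter_of_dominated_convergence (fun s => ‖F s‖) ?_ ?_ hF.norm ?_
    · exact Eventually.of_forall fun p => hF.aestronglyMeasurable.indicator (hS p)
    · exact Eventually.of_forall fun p =>
        Eventually.of_forall fun s => norm_indicator_le_norm_self F s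
    · have h0 : ∀ᵐ s : ℝ, s ≠ 0 := by
        refine compl_mem_ae_iff.mpr ?_
        exact measure_mono_null (fun x hx => by exact hx) (measure_singleton 0)
      filter_upwards [h0] with s hs
      have hpos : 0 < |s| := abs_pos.mpr hs
      have h1 : ∀ᶠ δ in nhdsWithin (0:ℝ) (Set.Ioi 0), δ ≤ |s| :=
        Eventually.filter_mono nhdsWithin_le_nhds
          ((eventually_lt_nhds hpos).mono fun x hx => hx.le)
      have h2 : ∀ᶠ A in (atTop : Filter ℝ), |s| ≤ A := eventually_ge_atTop |s|
      have hev : ∀ᶠ p in filt, s ∈ S p := (h1.prod_inl atTop).and (h2.prod_inr _)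
      exact tendsto_const_nhds.congr' (hev.mono fun p hp => (Set.indicator_of_mem hp F).symm)
  -- Step B : the two integrals agree eventually
  have hB : ∀ᶠ p in filt, (∫ s, (S p).indicator F s) = ∫ s in S p, h s := by
    filter_upwards [(eventually_mem_nhdsWithin).prod_inl (atTop : Filter ℝ)] with p hp
    have hδ : 0 < p.1 := hp
    set corr : ℝ → ℝ := fun s => Set.indicator {t : ℝ | |t| ≤ 1} (fun t => b * t⁻¹) s with hcorr
    have hcorr_int : IntegrableOn corr (S p) := by
      rw [IntegrableOn, hcorr]
      rw [integrable_indicator_iff hB1, IntegrableOn, Measure.restrict_restrict hB1]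
      refine Measure.integrableOn_of_bounded (M := |b| * p.1⁻¹) ?_ ?_ ?_
      · refine ne_of_lt (lt_of_le_of_lt (measure_mono ?_) (?_ : volume (Set.Icc (-1:ℝ) 1) < ⊤))
        · intro x hx
          have := hx.1
          exact Set.mem_Icc.mpr (abs_le.mp this)
        · simp
      · exact (measurable_const.mul measurable_inv).aestronglyMeasurable
      · refine (ae_restrict_iff' (hB1.inter (hS p))).mpr (Eventually.of_forall ?_)
        intro x hx
        have hx1 : p.1 ≤ |x| := hx.2.1
        have hxpos : 0 < |x| := lt_of_lt_of_le hδ hx1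
        rw [norm_mul, norm_inv]
        have : |x|⁻¹ ≤ p.1⁻¹ := inv_anti₀ hδ hx1
        exact mul_le_mul_of_nonneg_left this (abs_nonneg b)
    have hne : ∀ s ∈ S p, s ≠ 0 := by
      intro s hs h0
      rw [h0] at hs
      simp only [hSdef, Set.mem_setOf_eq, abs_zero] at hs
      linarith [hs.1]
    have heq' : ∀ s ∈ S p, h s = F s + corr s := by
      intro s hs
      rw [heq s (hne s hs), hcorr]
      congr 1
    have hzero : ∫ s in S p, corr s = 0 := by
      rw [hcorr]
      rw [setIntegral_indicator hB1]
      rw [integral_const_mul]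
      rw [odd_set_inv_integral_zero _ ((hS p).inter hB1) ?_, mul_zero]
      intro s
      simp only [hSdef, Set.mem_inter_iff, Set.mem_setOf_eq, abs_neg]
    rw [setIntegral_congr_fun (hS p) heq', integral_add hF.integrableOn hcorr_int, hzero,
      add_zero, integral_indicator (hS p)]
  exact Tendsto.congr' hB hA


lemma abs_sub_le_of_uIcc {a b y t r : ℝ} (hy : y ∈ Set.uIcc a b)
    (ha : |a - t| ≤ r) (hb : |b - t| ≤ r) : |y - t| ≤ r := by
  rcases Set.mem_uIcc.mp hy with ⟨h1, h2⟩ | ⟨h1, h2⟩ <;>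
    rw [abs_le] at ha hb ⊢ <;> constructor <;> linarith [ha.1, ha.2, hb.1, hb.2]

lemma mvt_abs (f f' : ℝ → ℝ) (hf : ∀ x, HasDerivAt f (f' x) x) (a b K : ℝ)
    (hK : ∀ y ∈ Set.uIcc a b, |f' y| ≤ K) : |f b - f a| ≤ K * |b - a| :=
  Convex.norm_image_sub_le_of_norm_hasDerivWithin_le
    (fun x hx => (hf x).hasDerivWithinAt) hK (convex_uIcc a b)
    Set.left_mem_uIcc Set.right_mem_uIcc


theorem stmt_15 (φ₃ : ℝ → ℝ) (hφ : ContDiff ℝ (⊤ : ℕ∞) φ₃)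
    (hdecay : ∀ l : ℕ, l ≤ 2 → ∃ C R : ℝ, ∀ s : ℝ, R ≤ |s| →
      |iteratedDeriv l φ₃ s| ≤ C * |s| ^ ((1:ℝ)/2 - (l : ℝ))) :
    ∀ c > (0:ℝ), ∃ C > (0:ℝ), ∀ q : ℝ, |q| ≤ c → ∀ Δq : ℝ, 0 < |Δq| → |Δq| ≤ 1 →
      ∃ L : ℝ,
        Tendsto
          (fun p : ℝ × ℝ =>
            ∫ s in {s : ℝ | p.1 ≤ |s| ∧ |s| ≤ p.2},
              s⁻¹ * (deriv φ₃ (s + q + Δq) - deriv φ₃ (s + q)))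
          ((nhdsWithin (0:ℝ) (Set.Ioi 0)) ×ˢ atTop) (nhds L) ∧
        |L| ≤ C * |Δq| := by
  intro c hc
  have hφ' : ContDiff ℝ (⊤ : ℕ∞) φ₃ := hφ.of_le (by simp)
  set f := deriv φ₃ with hfdef
  set f' := deriv f with hf'def
  set f'' := deriv f' with hf''def
  have hφ1 : ContDiff ℝ (⊤ : ℕ∞) f := (contDiff_infty_iff_deriv.mp hφ').2
  have hφ2 : ContDiff ℝ (⊤ : ℕ∞) f' := (contDiff_infty_iff_deriv.mp hφ1).2
  have hfd : Differentiable ℝ f := hφ1.differentiable (by simp)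
  have hfd' : Differentiable ℝ f' := hφ2.differentiable (by simp)
  have hf''c : Continuous f'' := (contDiff_infty_iff_deriv.mp hφ2).2.continuous
  obtain ⟨C₂, R₂, hC₂⟩ := hdecay 2 le_rfl
  have hC₂' : ∀ y : ℝ, R₂ ≤ |y| → |f' y| ≤ C₂ * |y| ^ (-(3:ℝ)/2) := by
    intro y hy
    have h := hC₂ y hy
    rw [iteratedDeriv_succ, iteratedDeriv_one] at h
    have he : ((1:ℝ)/2 - ((2:ℕ) : ℝ)) = -(3:ℝ)/2 := by push_cast; norm_num
    rwa [he] at h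
  set R' := max R₂ 1 with hR'def
  have hR'1 : 1 ≤ R' := le_max_right _ _
  have hR'2 : R₂ ≤ R' := le_max_left _ _
  set T := 2 * (R' + c + 1) with hTdef
  have hT4 : 4 ≤ T := by simp only [hTdef]; linarith
  have hTpos : 0 < T := by linarith
  obtain ⟨M₁, hM₁⟩ := (isCompact_Icc (a := -(T+c+1)) (b := T+c+1)).exists_bound_of_continuousOn
    hfd'.continuous.continuousOn
  obtain ⟨M₂, hM₂⟩ := (isCompact_Icc (a := -(c+2)) (b := c+2)).exists_bound_of_continuousOn
    hf''c.continuousOn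
  set M := max (max M₁ M₂) 0 with hMdef
  have hM0 : 0 ≤ M := le_max_right _ _
  set Kk := (2:ℝ) ^ ((3:ℝ)/2) with hKkdef
  have hKk : 0 < Kk := Real.rpow_pos_of_pos two_pos _
  set C₂'' := max C₂ 0 * Kk with hC₂''def
  have hC₂''0 : 0 ≤ C₂'' := mul_nonneg (le_max_right _ _) hKk.le
  set ψ := fun s : ℝ => if |s| ≤ T then M else C₂'' * |s| ^ (-(3:ℝ)/2) with hψdef
  have hψint : Integrable ψ := psi_integrable T M C₂'' hTpos
  have hψnn : ∀ s, 0 ≤ ψ s := by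
    intro s
    simp only [hψdef]
    split_ifs with h
    · exact hM0
    · exact mul_nonneg hC₂''0 (Real.rpow_nonneg (abs_nonneg s) _)
  have hψI : 0 ≤ ∫ s, ψ s := integral_nonneg hψnn
  refine ⟨(∫ s, ψ s) + 1, by linarith, ?_⟩
  intro q hq Δq hΔq0 hΔq1
  set g := fun s : ℝ => f (s + q + Δq) - f (s + q) with hgdef
  have hfat : ∀ x : ℝ, HasDerivAt f (f' x) x := fun x => (hfd x).hasDerivAt
  have hf'at : ∀ x : ℝ, HasDerivAt f' (f'' x) x := fun x => (hfd' x).hasDerivAt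
  have habs_qd : |q + Δq| ≤ c + 1 := (abs_add_le q Δq).trans (by linarith)
  -- membership helper
  have hmem : ∀ s y : ℝ, y ∈ Set.uIcc (s+q) (s+q+Δq) → |y - s| ≤ c + 1 := by
    intro s y hy
    refine abs_sub_le_of_uIcc hy ?_ ?_
    · have h : (s+q) - s = q := by ring
      rw [h]; exact hq.trans (by linarith)
    · have h : (s+q+Δq) - s = q + Δq := by ring
      rw [h]; exact habs_qd
  -- main MVT for g
  have key_mvt : ∀ s K : ℝ, (∀ y ∈ Set.uIcc (s+q) (s+q+Δq), |f' y| ≤ K) → |g s| ≤ K * |Δq| := by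
    intro s K hK
    have h := mvt_abs f f' hfat (s+q) (s+q+Δq) K hK
    have he : (s+q+Δq) - (s+q) = Δq := by ring
    rwa [he] at h
  -- bound on the compact part
  have hg_bdd : ∀ s : ℝ, |s| ≤ T → |g s| ≤ M₁ * |Δq| := by
    intro s hs
    refine key_mvt s M₁ (fun y hy => ?_)
    have h1 : |y - s| ≤ c + 1 := hmem s y hy
    have h2 : |y| ≤ T + c + 1 := by
      have h3 : |y| - |s| ≤ |y - s| := abs_sub_abs_le_abs_sub y s
      linarith
    exact hM₁ y (Set.mem_Icc.mpr (abs_le.mp h2))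
  -- bound on the tail
  have hg_tail : ∀ s : ℝ, T < |s| → |g s| ≤ (C₂'' * |s| ^ (-(3:ℝ)/2)) * |Δq| := by
    intro s hs
    refine key_mvt s _ (fun y hy => ?_)
    have h1 : |y - s| ≤ c + 1 := hmem s y hy
    have hsy : |s| - |y| ≤ c + 1 := by
      have h3 : |s| - |y| ≤ |s - y| := abs_sub_abs_le_abs_sub s y
      rw [abs_sub_comm] at h3
      linarith
    have hhalf : R' + c + 1 ≤ |s| / 2 := by rw [hTdef] at hs; linarith
    have h2 : |s| / 2 ≤ |y| := by linarith
    have hy_R : R₂ ≤ |y| := by linarith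
    have hb := hC₂' y hy_R
    have hspos : 0 < |s| / 2 := by linarith
    have hmono : |y| ^ (-(3:ℝ)/2) ≤ (|s|/2) ^ (-(3:ℝ)/2) :=
      Real.rpow_le_rpow_of_nonpos hspos h2 (by norm_num)
    have h2inv : ((2:ℝ) ^ (-(3:ℝ)/2))⁻¹ = Kk := by
      refine inv_eq_of_mul_eq_one_right ?_
      rw [hKkdef, ← Real.rpow_add two_pos]
      norm_num
    have hsplit : (|s|/2) ^ (-(3:ℝ)/2) = Kk * |s| ^ (-(3:ℝ)/2) := by
      rw [Real.div_rpow (abs_nonneg s) (by norm_num : (0:ℝ) ≤ 2), div_eq_mul_inv, h2inv,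
        mul_comm]
    have hrnn : 0 ≤ |y| ^ (-(3:ℝ)/2) := Real.rpow_nonneg (abs_nonneg y) _
    calc |f' y| ≤ C₂ * |y| ^ (-(3:ℝ)/2) := hb
      _ ≤ max C₂ 0 * |y| ^ (-(3:ℝ)/2) := mul_le_mul_of_nonneg_right (le_max_left _ _) hrnn
      _ ≤ max C₂ 0 * ((|s|/2) ^ (-(3:ℝ)/2)) :=
          mul_le_mul_of_nonneg_left hmono (le_max_right _ _)
      _ = C₂'' * |s| ^ (-(3:ℝ)/2) := by rw [hsplit, hC₂''def]; ring
  -- derivative of g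
  have hgd : ∀ x : ℝ, HasDerivAt g (f' (x+q+Δq) - f' (x+q)) x := by
    intro x
    have inner1 : HasDerivAt (fun s : ℝ => s + q + Δq) 1 x := by
      simpa using ((hasDerivAt_id x).add_const q).add_const Δq
    have inner2 : HasDerivAt (fun s : ℝ => s + q) 1 x := (hasDerivAt_id x).add_const q
    have h1 := (hfat (x+q+Δq)).comp x inner1
    have h2 := (hfat (x+q)).comp x inner2
    have h3 := h1.sub h2
    simp only [mul_one] at h3
    exact h3
  -- bound on the derivative of g near zero
  have hg'_bdd : ∀ x : ℝ, |x| ≤ 1 → |f' (x+q+Δq) - f' (x+q)| ≤ M₂ * |Δq| := by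
    intro x hx
    have h := mvt_abs f' f'' hf'at (x+q) (x+q+Δq) M₂ (fun y hy => ?_)
    · have he : (x+q+Δq) - (x+q) = Δq := by ring
      rwa [he] at h
    · have h1 : |y - x| ≤ c + 1 := hmem x y hy
      have h2 : |y| ≤ c + 2 := by
        have h3 : |y| - |x| ≤ |y - x| := abs_sub_abs_le_abs_sub y x
        linarith
      exact hM₂ y (Set.mem_Icc.mpr (abs_le.mp h2))
  have hg0 : ∀ s : ℝ, |s| ≤ 1 → |g s - g 0| ≤ (M₂ * |Δq|) * |s| := by
    intro s hs
    have h := mvt_abs g (fun x => f' (x+q+Δq) - f' (x+q)) hgd 0 s (M₂ * |Δq|)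
      (fun y hy => by
        have hy1 : |y - 0| ≤ |s| := abs_sub_le_of_uIcc hy (by simp) (by simp)
        rw [sub_zero] at hy1
        exact hg'_bdd y (hy1.trans hs))
    rwa [sub_zero] at h
  -- the renormalized integrand
  set F := fun s : ℝ => if |s| ≤ 1 then s⁻¹ * (g s - g 0) else s⁻¹ * g s with hFdef
  have hFbound : ∀ s : ℝ, ‖F s‖ ≤ |Δq| * ψ s := by
    intro s
    rw [Real.norm_eq_abs, hFdef, hψdef]
    simp only
    by_cases h1 : |s| ≤ 1
    · rw [if_pos h1, if_pos (h1.trans (by linarith))]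
      by_cases h0 : s = 0
      · subst h0
        simp only [sub_self, mul_zero, abs_zero]
        exact mul_nonneg (abs_nonneg _) hM0
      · have habs : 0 < |s| := abs_pos.mpr h0
        rw [abs_mul, abs_inv]
        have hgb := hg0 s h1
        calc |s|⁻¹ * |g s - g 0| ≤ |s|⁻¹ * ((M₂ * |Δq|) * |s|) :=
              mul_le_mul_of_nonneg_left hgb (inv_nonneg.mpr (abs_nonneg s))
          _ = M₂ * |Δq| := by field_simp
          _ ≤ M * |Δq| := mul_le_mul_of_nonneg_right
              ((le_max_right M₁ M₂).trans (le_max_left _ 0)) (abs_nonneg Δq)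
          _ = |Δq| * M := mul_comm _ _
    · push_neg at h1
      have hsinv : |s|⁻¹ ≤ 1 := inv_le_one_of_one_le₀ h1.le
      rw [if_neg (not_le.mpr h1), abs_mul, abs_inv]
      by_cases h2 : |s| ≤ T
      · rw [if_pos h2]
        calc |s|⁻¹ * |g s| ≤ 1 * (M₁ * |Δq|) :=
              mul_le_mul hsinv (hg_bdd s h2) (abs_nonneg _) zero_le_one
          _ = M₁ * |Δq| := one_mul _
          _ ≤ M * |Δq| := mul_le_mul_of_nonneg_right
              ((le_max_left M₁ M₂).trans (le_max_left _ 0)) (abs_nonneg Δq)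
          _ = |Δq| * M := mul_comm _ _
      · push_neg at h2
        rw [if_neg (not_le.mpr h2)]
        calc |s|⁻¹ * |g s| ≤ 1 * ((C₂'' * |s| ^ (-(3:ℝ)/2)) * |Δq|) :=
              mul_le_mul hsinv (hg_tail s h2) (abs_nonneg _) zero_le_one
          _ = |Δq| * (C₂'' * |s| ^ (-(3:ℝ)/2)) := by ring
  have hfc : Continuous f := hφ1.continuous
  have hgc : Continuous g :=
    (hfc.comp ((continuous_id.add continuous_const).add continuous_const)).sub
      (hfc.comp (continuous_id.add continuous_const))
  have hBset : MeasurableSet {s : ℝ | |s| ≤ 1} :=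
    measurableSet_le continuous_abs.measurable measurable_const
  have hFmeas : AEStronglyMeasurable F volume := by
    refine (Measurable.ite hBset ?_ ?_).aestronglyMeasurable
    · exact measurable_id.inv.mul (hgc.measurable.sub measurable_const)
    · exact measurable_id.inv.mul hgc.measurable
  have hFint : Integrable F :=
    Integrable.mono' (hψint.const_mul |Δq|) hFmeas (Eventually.of_forall hFbound)
  refine ⟨∫ s, F s, ?_, ?_⟩
  · refine pv_aux _ F (g 0) hFint ?_
    intro s hs
    rw [hFdef]
    simp only
    split_ifs with h
    · ring
    · ring
  · have hL := norm_integral_le_of_norm_le (hψint.const_mul |Δq|) (Eventually.of_forall hFbound)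
    rw [integral_const_mul] at hL
    rw [Real.norm_eq_abs] at hL
    nlinarith [abs_nonneg Δq, hψI]
end

section
/- Suppose the support of w is contained in [−c₀, c₀] for some c₀ > 0. Then there exist c ≥ 1 and C > 0 such that for all t ≤ −c and all h with |h| ≤ 1: |ψ(t + h) − ψ(t) − h/(4(−t)^{3/2})| ≤ C(−t)^{−5/2}. -/
open MeasureTheory Real Filter

set_option maxHeartbeats 1000000


lemma sqrt_diff (s₁ s₂ : ℝ) (h1 : 0 < s₁) (h2 : 0 < s₂) :
    1/√s₁ - 1/√s₂ = (s₂ - s₁) / (√s₁ * √s₂ * (√s₁ + √s₂)) := by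
  have x1 : (0:ℝ) < √s₁ := Real.sqrt_pos.mpr h1
  have x2 : (0:ℝ) < √s₂ := Real.sqrt_pos.mpr h2
  have e1 : √s₁ * √s₁ = s₁ := Real.mul_self_sqrt h1.le
  have e2 : √s₂ * √s₂ = s₂ := Real.mul_self_sqrt h2.le
  have key : s₂ - s₁ = (√s₂ - √s₁) * (√s₁ + √s₂) := by linear_combination e1 - e2
  rw [key]; field_simp

lemma key_est (b δ s₁ s₂ h : ℝ) (hδ : 1 ≤ δ) (hb : 2*δ ≤ b)
    (h1l : b - δ ≤ s₁) (h1u : s₁ ≤ b + δ) (h2l : b - δ ≤ s₂) (h2u : s₂ ≤ b + δ)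
    (hs : s₂ - s₁ = h) (hh : |h| ≤ 1) :
    |1/√s₁ - 1/√s₂ - h/(2*(√b)^3)| ≤ (16*δ)/(√b)^5 := by
  have hδ0 : (0:ℝ) < δ := lt_of_lt_of_le one_pos hδ
  have hbpos : (0:ℝ) < b := by linarith
  have hbd : (0:ℝ) < b - δ := by linarith
  have hs1 : (0:ℝ) < s₁ := by linarith
  have hs2 : (0:ℝ) < s₂ := by linarith
  set x := √s₁ with hx
  set y := √s₂ with hy
  set β := √b with hβ
  set B := √(b-δ) with hB
  set A := √(b+δ) with hA
  have hx0 : 0 < x := Real.sqrt_pos.mpr hs1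
  have hy0 : 0 < y := Real.sqrt_pos.mpr hs2
  have hβ0 : 0 < β := Real.sqrt_pos.mpr hbpos
  have hB0 : 0 < B := Real.sqrt_pos.mpr hbd
  have hA0 : 0 < A := Real.sqrt_pos.mpr (by linarith)
  have hβ2 : β^2 = b := Real.sq_sqrt hbpos.le
  have hB2 : B^2 = b - δ := Real.sq_sqrt hbd.le
  have hA2 : A^2 = b + δ := Real.sq_sqrt (by linarith)
  have hBx : B ≤ x := Real.sqrt_le_sqrt h1l
  have hxA : x ≤ A := Real.sqrt_le_sqrt h1u
  have hBy : B ≤ y := Real.sqrt_le_sqrt h2l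
  have hyA : y ≤ A := Real.sqrt_le_sqrt h2u
  have hBβ : B ≤ β := Real.sqrt_le_sqrt (by linarith)
  have hβA : β ≤ A := Real.sqrt_le_sqrt (by linarith)
  set P := x * y * (x + y) with hP
  have hP0 : 0 < P := by positivity
  have hdiff : 1/√s₁ - 1/√s₂ = h / P := by
    rw [sqrt_diff s₁ s₂ hs1 hs2, hs]
  rw [hdiff]
  have hβ3 : (0:ℝ) < β^3 := by positivity
  have hcomb : h / P - h / (2*β^3) = h * (2*β^3 - P) / (P * (2*β^3)) := by
    field_simp
  rw [hcomb, abs_div, abs_mul]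
  -- interval bounds on P
  have hPl : 2*B^3 ≤ P := by
    have m1 : B*B ≤ x*y := mul_le_mul hBx hBy hB0.le hx0.le
    have m2 : B+B ≤ x+y := add_le_add hBx hBy
    have m3 : (B*B)*(B+B) ≤ (x*y)*(x+y) :=
      mul_le_mul m1 m2 (by linarith) (by positivity)
    calc 2*B^3 = (B*B)*(B+B) := by ring
      _ ≤ P := m3
  have hPu : P ≤ 2*A^3 := by
    have m1 : x*y ≤ A*A := mul_le_mul hxA hyA hy0.le hA0.le
    have m2 : x+y ≤ A+A := add_le_add hxA hyA
    have m3 : (x*y)*(x+y) ≤ (A*A)*(A+A) :=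
      mul_le_mul m1 m2 (by positivity) (by positivity)
    calc P ≤ (A*A)*(A+A) := m3
      _ = 2*A^3 := by ring
  have hB3β : B^3 ≤ β^3 := pow_le_pow_left₀ hB0.le hBβ 3
  have hβ3A : β^3 ≤ A^3 := pow_le_pow_left₀ hβ0.le hβA 3
  -- A^3 - B^3 ≤ 8δβ
  have hcube : (A^3 - B^3) * (A^3 + B^3) = (b+δ)^3 - (b-δ)^3 := by
    have e : (A^3 - B^3) * (A^3 + B^3) = (A^2)^3 - (B^2)^3 := by ring
    rw [hA2, hB2] at e; exact e
  have hABd : A^3 - B^3 ≤ 8*δ*β := by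
    have hδb : δ ≤ b := by linarith
    have h1 : (b+δ)^3 - (b-δ)^3 ≤ 8*δ*b^2 := by
      nlinarith [mul_nonneg (mul_nonneg hδ0.le hbd.le) (show (0:ℝ) ≤ b+δ by linarith)]
    have hβ4 : β^4 = b^2 := by
      calc β^4 = (β^2)^2 := by ring
        _ = b^2 := by rw [hβ2]
    have hAB0 : 0 ≤ A^3 - B^3 := by linarith
    have h2 : (A^3 - B^3) * β^3 ≤ (A^3 - B^3) * (A^3 + B^3) := by
      apply mul_le_mul_of_nonneg_left _ hAB0
      have : (0:ℝ) < B^3 := by positivity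
      linarith
    have h3 : (A^3 - B^3) * β^3 ≤ (8*δ*β) * β^3 := by
      calc (A^3 - B^3) * β^3 ≤ (b+δ)^3 - (b-δ)^3 := by rw [← hcube]; exact h2
        _ ≤ 8*δ*b^2 := h1
        _ = 8*δ*β^4 := by rw [hβ4]
        _ = (8*δ*β) * β^3 := by ring
    exact le_of_mul_le_mul_right h3 hβ3
  have hnum : |2*β^3 - P| ≤ 16*δ*β := by
    rw [abs_le]; constructor <;> linarith
  -- P ≥ β^3/2
  have hPlow : β^3/2 ≤ P := by
    have h16 : β^6 ≤ 16 * B^6 := by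
      have hb2 : b ≤ 2*(b-δ) := by linarith
      have hcb : b^3 ≤ (2*(b-δ))^3 := pow_le_pow_left₀ hbpos.le hb2 3
      have hge : (0:ℝ) ≤ (b-δ)^3 := by positivity
      have hcb8 : (2*(b-δ))^3 = 8*(b-δ)^3 := by ring
      have : b^3 ≤ 16*(b-δ)^3 := by rw [hcb8] at hcb; linarith
      calc β^6 = (β^2)^3 := by ring
        _ = b^3 := by rw [hβ2]
        _ ≤ 16*(b-δ)^3 := this
        _ = 16*(B^2)^3 := by rw [hB2]
        _ = 16 * B^6 := by ring
    have h4 : β^3 ≤ 4*B^3 := by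
      by_contra hlt
      push_neg at hlt
      have hm : (4*B^3)*(4*B^3) < β^3*β^3 := mul_self_lt_mul_self (by positivity) hlt
      have e : (4*B^3)*(4*B^3) = 16*B^6 := by ring
      have e2 : β^3*β^3 = β^6 := by ring
      rw [e, e2] at hm; linarith
    linarith
  have hden : β^6 ≤ P * (2*β^3) := by
    calc β^6 = (β^3/2) * (2*β^3) := by ring
      _ ≤ P * (2*β^3) := by
        apply mul_le_mul_of_nonneg_right hPlow (by positivity)
  have hhb : |h| * |2*β^3 - P| ≤ 16*δ*β := by
    calc |h| * |2*β^3 - P| ≤ 1 * (16*δ*β) :=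
      mul_le_mul hh hnum (abs_nonneg _) one_pos.le
      _ = 16*δ*β := one_mul _
  rw [abs_of_pos (show (0:ℝ) < P*(2*β^3) by positivity)]
  have hfin : abs h * abs (2*β^3 - P) / (P * (2*β^3)) ≤ 16*δ/β^5 := by
    rw [show (16*δ/β^5 : ℝ) = (16*δ*β)/β^6 by field_simp]
    exact div_le_div₀ (by positivity) hhb (by positivity) hden
  exact hfin

-- kernel measurability
lemma ker_meas (q : ℝ) : Measurable (fun u : ℝ => (u - q) ^ (-(1/2) : ℝ)) := by
  apply measurable_of_continuousOn_compl_singleton q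
  intro u hu
  have : ContinuousOn (fun u : ℝ => u - q) ({q}ᶜ) := (continuous_id.sub continuous_const).continuousOn
  refine (this.rpow_const fun x hx => Or.inl ?_) u hu
  simpa [sub_eq_zero] using hx

section main
variable (w : ℝ → ℝ) (c₀ : ℝ)

-- rewrite psiF as integral over all of ℝ
lemma psiF_eq (hsupp : Function.support w ⊆ Set.Icc (-c₀) c₀) (q : ℝ) (hq : q < -c₀) :
    psiF w q = (1/2) * ∫ u, w u * (u - q) ^ (-(1/2) : ℝ) := by
  unfold psiF
  congr 1
  rw [setIntegral_eq_integral_of_forall_compl_eq_zero (f := fun p => w (q + p) * p ^ (-(1/2):ℝ))]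
  · have h := integral_add_left_eq_self (μ := volume)
      (fun u => w u * (u - q) ^ (-(1/2):ℝ)) q
    simp only [add_sub_cancel_left] at h
    exact h
  · intro p hp
    simp only [Set.mem_Ioi, not_lt] at hp
    have hw : w (q + p) = 0 := by
      by_contra hw
      have hm := hsupp (Function.mem_support.mpr hw)
      have := hm.1
      linarith
    rw [hw, zero_mul]

lemma psiF_integrable (hwInt : Integrable w volume)
    (hsupp : Function.support w ⊆ Set.Icc (-c₀) c₀) (q : ℝ) (hq : q ≤ -c₀ - 1) :
    Integrable (fun u => w u * (u - q) ^ (-(1/2) : ℝ)) volume := by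
  apply Integrable.mono hwInt
  · exact hwInt.aestronglyMeasurable.mul (ker_meas q).aestronglyMeasurable
  · filter_upwards with u
    rcases eq_or_ne (w u) 0 with h0 | h0
    · simp [h0]
    · have hm := hsupp (Function.mem_support.mpr h0)
      have h1 : (1:ℝ) ≤ u - q := by have := hm.1; linarith
      rw [norm_mul]
      have hk : ‖(u - q) ^ (-(1/2):ℝ)‖ ≤ 1 := by
        rw [Real.norm_eq_abs, abs_of_nonneg (Real.rpow_nonneg (by linarith) _)]
        exact Real.rpow_le_one_of_one_le_of_nonpos h1 (by norm_num)
      calc ‖w u‖ * ‖(u - q) ^ (-(1/2):ℝ)‖ ≤ ‖w u‖ * 1 :=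
        mul_le_mul_of_nonneg_left hk (norm_nonneg _)
        _ = ‖w u‖ := mul_one _

end main

theorem stmt_19 (w : ℝ → ℝ) (hwInt : Integrable w volume)
    (hwSupp : HasCompactSupport w) (hwOne : ∫ p, w p = 1)
    (c₀ : ℝ) (hc₀ : 0 < c₀) (hsupp : Function.support w ⊆ Set.Icc (-c₀) c₀) :
    ∃ c : ℝ, 1 ≤ c ∧ ∃ C > 0, ∀ t : ℝ, t ≤ -c → ∀ h : ℝ, |h| ≤ 1 →
      |psiF w (t + h) - psiF w t - h / (4 * (-t) ^ ((3:ℝ)/2))|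
        ≤ C * (-t) ^ (-(5:ℝ)/2) := by
  set δ : ℝ := c₀ + 1 with hδdef
  have hδ1 : (1:ℝ) ≤ δ := by simp [hδdef]; linarith
  have hδ0 : (0:ℝ) < δ := by linarith
  have hInorm : (0:ℝ) ≤ ∫ u, ‖w u‖ := integral_nonneg fun u => norm_nonneg _
  refine ⟨2*δ, by linarith, 8*δ*((∫ u, ‖w u‖) + 1), by positivity, ?_⟩
  intro t ht h hh
  set b : ℝ := -t with hbdef
  have hb : 2*δ ≤ b := by rw [hbdef]; linarith
  have hbpos : (0:ℝ) < b := by linarith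
  set β : ℝ := √b with hβdef
  have hβ0 : (0:ℝ) < β := Real.sqrt_pos.mpr hbpos
  -- rpow conversions
  have hb32 : (-t) ^ ((3:ℝ)/2) = β^3 := by
    rw [← hbdef, show ((3:ℝ)/2) = (1/2) * (3:ℕ) by norm_num, Real.rpow_mul hbpos.le,
      Real.rpow_natCast, hβdef, Real.sqrt_eq_rpow]
  have hb52 : (-t) ^ (-(5:ℝ)/2) = (β^5)⁻¹ := by
    rw [← hbdef, show (-(5:ℝ)/2) = -((1/2) * (5:ℕ)) by norm_num, Real.rpow_neg hbpos.le,
      Real.rpow_mul hbpos.le, Real.rpow_natCast, hβdef, Real.sqrt_eq_rpow]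
  -- bounds on q values
  have hth : t + h ≤ -c₀ - 1 := by
    have h2 := (abs_le.mp hh).2
    have hδe : δ = c₀ + 1 := hδdef
    linarith
  have ht' : t ≤ -c₀ - 1 := by
    have hδe : δ = c₀ + 1 := hδdef
    linarith
  -- integrability
  have I1 := psiF_integrable w c₀ hwInt hsupp (t+h) hth
  have I2 := psiF_integrable w c₀ hwInt hsupp t ht'
  have I3 : Integrable (fun u => w u * (h/(2*β^3))) volume := hwInt.mul_const _
  -- the main identity
  have key_eq : psiF w (t+h) - psiF w t - h / (4 * (-t)^((3:ℝ)/2))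
      = (1/2) * ∫ u, w u * ((u - (t+h)) ^ (-(1/2):ℝ) - (u - t) ^ (-(1/2):ℝ) - h/(2*β^3)) := by
    rw [psiF_eq w c₀ hsupp (t+h) (by linarith), psiF_eq w c₀ hsupp t (by linarith), hb32]
    have hsplit : ∫ u, w u * ((u - (t+h)) ^ (-(1/2):ℝ) - (u - t) ^ (-(1/2):ℝ) - h/(2*β^3))
        = (∫ u, w u * (u - (t+h)) ^ (-(1/2):ℝ)) - (∫ u, w u * (u - t) ^ (-(1/2):ℝ))
          - ∫ u, w u * (h/(2*β^3)) := by
      have hsub1 : ∫ u, (w u * (u - (t+h)) ^ (-(1/2):ℝ) - w u * (u - t) ^ (-(1/2):ℝ))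
          = (∫ u, w u * (u - (t+h)) ^ (-(1/2):ℝ)) - ∫ u, w u * (u - t) ^ (-(1/2):ℝ) :=
        integral_sub I1 I2
      have hsub2 : ∫ u, ((w u * (u - (t+h)) ^ (-(1/2):ℝ) - w u * (u - t) ^ (-(1/2):ℝ)) - w u * (h/(2*β^3)))
          = (∫ u, (w u * (u - (t+h)) ^ (-(1/2):ℝ) - w u * (u - t) ^ (-(1/2):ℝ))) - ∫ u, w u * (h/(2*β^3)) :=
        integral_sub (I1.sub I2) I3
      calc ∫ u, w u * ((u - (t+h)) ^ (-(1/2):ℝ) - (u - t) ^ (-(1/2):ℝ) - h/(2*β^3))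
          = ∫ u, ((w u * (u - (t+h)) ^ (-(1/2):ℝ) - w u * (u - t) ^ (-(1/2):ℝ)) - w u * (h/(2*β^3))) := by
            congr 1; funext u; ring
        _ = _ := by rw [hsub2, hsub1]
    have hconst : ∫ u, w u * (h/(2*β^3)) = h/(2*β^3) := by
      rw [integral_mul_const, hwOne, one_mul]
    rw [hsplit, hconst]
    have hβ3 : β^3 ≠ 0 := by positivity
    field_simp
    ring
  rw [key_eq, hb52]
  -- bound the integral
  have hbound : ‖∫ u, w u * ((u - (t+h)) ^ (-(1/2):ℝ) - (u - t) ^ (-(1/2):ℝ) - h/(2*β^3))‖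
      ≤ ∫ u, ‖w u‖ * (16*δ/β^5) := by
    apply norm_integral_le_of_norm_le (hwInt.norm.mul_const _)
    filter_upwards with u
    rcases eq_or_ne (w u) 0 with h0 | h0
    · simp only [h0, zero_mul, norm_zero, norm_mul, norm_zero]
      positivity
    · have hm := hsupp (Function.mem_support.mpr h0)
      rw [norm_mul]
      apply mul_le_mul_of_nonneg_left _ (norm_nonneg _)
      -- pointwise estimate
      have hu1 := hm.1
      have hu2 := hm.2
      have hhl := (abs_le.mp hh).1
      have hhr := (abs_le.mp hh).2
      have hs1pos : (0:ℝ) < u - (t+h) := by linarith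
      have hs2pos : (0:ℝ) < u - t := by linarith
      have hr1 : (u - (t+h)) ^ (-(1/2):ℝ) = 1/√(u - (t+h)) := by
        rw [Real.rpow_neg hs1pos.le, Real.sqrt_eq_rpow]
        exact (one_div _).symm
      have hr2 : (u - t) ^ (-(1/2):ℝ) = 1/√(u - t) := by
        rw [Real.rpow_neg hs2pos.le, Real.sqrt_eq_rpow]
        exact (one_div _).symm
      rw [hr1, hr2, Real.norm_eq_abs]
      have hδe : δ = c₀ + 1 := hδdef
      have hbe : b = -t := hbdef
      have hkey := key_est b δ (u - (t+h)) (u - t) h hδ1 hb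
        (by linarith) (by linarith) (by linarith) (by linarith)
        (by ring) hh
      rw [← hβdef] at hkey
      exact hkey
  have hIconst : ∫ u, ‖w u‖ * (16*δ/β^5) = (∫ u, ‖w u‖) * (16*δ/β^5) := integral_mul_const _ _
  rw [Real.norm_eq_abs] at hbound
  calc |(1/2) * ∫ u, w u * ((u - (t+h)) ^ (-(1/2):ℝ) - (u - t) ^ (-(1/2):ℝ) - h/(2*β^3))|
      = (1/2) * |∫ u, w u * ((u - (t+h)) ^ (-(1/2):ℝ) - (u - t) ^ (-(1/2):ℝ) - h/(2*β^3))| := by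
        rw [abs_mul]; norm_num
    _ ≤ (1/2) * ((∫ u, ‖w u‖) * (16*δ/β^5)) := by
        apply mul_le_mul_of_nonneg_left _ (by norm_num)
        rw [← hIconst]; exact hbound
    _ = 8*δ*(∫ u, ‖w u‖) * (β^5)⁻¹ := by
        rw [div_eq_mul_inv]; ring
    _ ≤ 8*δ*((∫ u, ‖w u‖) + 1) * (β^5)⁻¹ := by
        apply mul_le_mul_of_nonneg_right _ (by positivity)
        have hle : (∫ u, ‖w u‖) ≤ (∫ u, ‖w u‖) + 1 := by linarith
        exact mul_le_mul_of_nonneg_left hle (by positivity)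
end
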